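/- arXiv:1402.6544 — 6 statements merged into one kernel-verified Lean document; each statement's English description precedes it below -/
import Mathlib

section
/- Let Θ: X → (-∞,∞] be proper, lower semi-continuous, and strongly convex with modulus c₀. Let x, x₊ ∈ X with ξ ∈ ∂Θ(x) and ξ₊ ∈ ∂Θ(x₊), so that x = ∇Θ*(ξ) and x₊ = ∇Θ*(ξ₊). Then for any x̂ ∈ X, the Bregman distances satisfy D_{ξ₊}Θ(x̂, x₊) - D_ξΘ(x̂, x) ≤ (1/(4c₀))‖ξ₊ - ξ‖² - ⟨ξ₊ - ξ, x̂ - x⟩. -/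
/-!
Strong convexity upgrades the subgradient inequality at `x` to
`Θ x + ⟪ξ, x₊ - x⟫ + c₀ ‖x₊ - x‖² ≤ Θ x₊` (apply it at `s • x₊ + (1 - s) • x` and let `s → 0⁺`).
In the difference of the two Bregman distances `Θ x̂` cancels, and what remains is bounded by
`⟪ξ₊ - ξ, x₊ - x⟫ - c₀ ‖x₊ - x‖² ≤ ‖ξ₊ - ξ‖² / (4 c₀)` (Young). In `EReal` the infinite
cases are trivial: `Θ x̂ = ⊤` makes the right side `⊤`, and `Θ x₊ = ⊤` the left side `⊥`.
-/

open scoped InnerProductSpace Topology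
open Filter

lemma le_of_forall_one_sub_mul_le {K C : ℝ} (h : ∀ s : ℝ, 0 < s → s ≤ 1 → (1 - s) * K ≤ C) :
    K ≤ C := by
  have hlim : Tendsto (fun s : ℝ => (1 - s) * K) (𝓝[>] 0) (𝓝 K) := by
    have hcont : Continuous (fun s : ℝ => (1 - s) * K) := by fun_prop
    simpa using hcont.continuousWithinAt.tendsto (x := 0) (s := Set.Ioi 0)
  refine le_of_tendsto hlim ?_
  filter_upwards [Ioc_mem_nhdsGT one_pos] with s hs using h s hs.1 hs.2

lemma EReal.ne_top_of_add_coe_le {a b : EReal} {r : ℝ} (hb : b ≠ ⊤) (h : a + r ≤ b) : a ≠ ⊤ := by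
  rintro rfl
  exact hb (top_le_iff.mp (by simpa using h))

section

variable {E : Type*} [NormedAddCommGroup E] [InnerProductSpace ℝ E]

lemma real_inner_le_sq_div_add_mul_sq (u v : E) {c : ℝ} (hc : 0 < c) :
    ⟪u, v⟫_ℝ ≤ ‖u‖ ^ 2 / (4 * c) + c * ‖v‖ ^ 2 := by
  have hcs := real_inner_le_norm u v
  rw [div_add' _ _ _ (by positivity), le_div_iff₀ (by positivity)]
  nlinarith [sq_nonneg (‖u‖ - 2 * c * ‖v‖)]

lemma add_inner_add_mul_sq_le_of_strongConvex {f : E → EReal} {c : ℝ} (hbot : ∀ z, f z ≠ ⊥)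
    (hsc : ∀ (z x : E) (s : ℝ), 0 ≤ s → s ≤ 1 →
      f (s • z + (1 - s) • x) + ((c * s * (1 - s) * ‖z - x‖ ^ 2 : ℝ) : EReal)
        ≤ (s : EReal) * f z + ((1 - s : ℝ) : EReal) * f x)
    {x ξ : E} (hξ : ∀ z, f x + ((⟪ξ, z - x⟫_ℝ : ℝ) : EReal) ≤ f z) (hx : f x ≠ ⊤) (z : E) :
    f x + ((⟪ξ, z - x⟫_ℝ + c * ‖z - x‖ ^ 2 : ℝ) : EReal) ≤ f z := by
  by_cases hz : f z = ⊤
  · simp [hz]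
  lift f x to ℝ using ⟨hx, hbot x⟩ with a ha
  lift f z to ℝ using ⟨hz, hbot z⟩ with b hb
  suffices c * ‖z - x‖ ^ 2 ≤ b - a - ⟪ξ, z - x⟫_ℝ by exact_mod_cast (by linarith : _ ≤ b)
  refine le_of_forall_one_sub_mul_le fun s hs0 hs1 => ?_
  have hseg : s • z + (1 - s) • x - x = s • (z - x) := by module
  have hcomb := (add_le_add_left (hξ (s • z + (1 - s) • x)) _).trans (hsc z x s hs0.le hs1)
  rw [← ha, ← hb, hseg, real_inner_smul_right] at hcomb
  have hreal : a + s * ⟪ξ, z - x⟫_ℝ + c * s * (1 - s) * ‖z - x‖ ^ 2 ≤ s * b + (1 - s) * a := by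
    exact_mod_cast hcomb
  nlinarith

lemma bregman_sub_le_of_add_inner_add_mul_sq_le {x xp ξ ξp xhat : E} {a b t c : ℝ} (hc : 0 < c)
    (h : a + (⟪ξ, xp - x⟫_ℝ + c * ‖xp - x‖ ^ 2) ≤ b) :
    t - b - ⟪ξp, xhat - xp⟫_ℝ
      ≤ t - a - ⟪ξ, xhat - x⟫_ℝ + (‖ξp - ξ‖ ^ 2 / (4 * c) - ⟪ξp - ξ, xhat - x⟫_ℝ) := by
  have hthree : ⟪ξp, xhat - xp⟫_ℝ = ⟪ξp, xhat - x⟫_ℝ - ⟪ξp, xp - x⟫_ℝ := by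
    rw [← inner_sub_right, sub_sub_sub_cancel_right]
  have hyoung := real_inner_le_sq_div_add_mul_sq (ξp - ξ) (xp - x) hc
  rw [inner_sub_left] at hyoung ⊢
  linarith

end

theorem bregman_difference_bound_general
    {X : Type*} [NormedAddCommGroup X] [InnerProductSpace ℝ X]
    (Θ : X → EReal) (c₀ : ℝ) (hc₀ : 0 < c₀)
    (hproper : (∀ z, Θ z ≠ ⊥) ∧ ∃ z, Θ z ≠ ⊤)
    (hsc : ∀ (z x : X) (s : ℝ), 0 ≤ s → s ≤ 1 →
      Θ (s • z + (1 - s) • x) + ((c₀ * s * (1 - s) * ‖z - x‖ ^ 2 : ℝ) : EReal)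
        ≤ (s : EReal) * Θ z + ((1 - s : ℝ) : EReal) * Θ x)
    (x xp ξ ξp : X)
    (hξ : ∀ z, Θ x + ((⟪ξ, z - x⟫_ℝ : ℝ) : EReal) ≤ Θ z)
    (xhat : X) :
    Θ xhat - Θ xp - ((⟪ξp, xhat - xp⟫_ℝ : ℝ) : EReal)
      ≤ (Θ xhat - Θ x - ((⟪ξ, xhat - x⟫_ℝ : ℝ) : EReal))
        + ((‖ξp - ξ‖ ^ 2 / (4 * c₀) - ⟪ξp - ξ, xhat - x⟫_ℝ : ℝ) : EReal) := by
  obtain ⟨hbot, z₀, hz₀⟩ := hproper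
  have hx : Θ x ≠ ⊤ := EReal.ne_top_of_add_coe_le hz₀ (hξ z₀)
  have hstrong := add_inner_add_mul_sq_le_of_strongConvex hbot hsc hξ hx xp
  lift Θ x to ℝ using ⟨hx, hbot x⟩ with a
  by_cases hhat : Θ xhat = ⊤
  · rw [hhat, EReal.top_sub_coe, EReal.top_sub_coe, EReal.top_add_coe]
    exact le_top
  by_cases hxp : Θ xp = ⊤
  · simp [hxp]
  lift Θ xp to ℝ using ⟨hxp, hbot xp⟩ with b
  lift Θ xhat to ℝ using ⟨hhat, hbot xhat⟩ with t
  norm_cast at hstrong ⊢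
  exact bregman_sub_le_of_add_inner_add_mul_sq_le hc₀ hstrong

/-- For proper, lsc, strongly convex `Θ` (modulus `c₀`), if `ξ ∈ ∂Θ(x)` and
`ξ₊ ∈ ∂Θ(x₊)`, then for any `x̂`:
`D_{ξ₊}Θ(x̂, x₊) - D_ξΘ(x̂, x) ≤ ‖ξ₊ - ξ‖²/(4c₀) - ⟪ξ₊ - ξ, x̂ - x⟫`
(stated equivalently in additive form, valid in the extended reals). -/
theorem bregman_difference_bound
    {X : Type*} [NormedAddCommGroup X] [InnerProductSpace ℝ X]
    (Θ : X → EReal) (c₀ : ℝ) (hc₀ : 0 < c₀)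
    (hproper : (∀ z, Θ z ≠ ⊥) ∧ ∃ z, Θ z ≠ ⊤)
    (hlsc : LowerSemicontinuous Θ)
    (hsc : ∀ (z x : X) (s : ℝ), 0 ≤ s → s ≤ 1 →
      Θ (s • z + (1 - s) • x) + ((c₀ * s * (1 - s) * ‖z - x‖ ^ 2 : ℝ) : EReal)
        ≤ (s : EReal) * Θ z + ((1 - s : ℝ) : EReal) * Θ x)
    (x xp ξ ξp : X)
    (hξ : ∀ z, Θ x + ((⟪ξ, z - x⟫_ℝ : ℝ) : EReal) ≤ Θ z)
    (hξp : ∀ z, Θ xp + ((⟪ξp, z - xp⟫_ℝ : ℝ) : EReal) ≤ Θ z)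
    (xhat : X) :
    Θ xhat - Θ xp - ((⟪ξp, xhat - xp⟫_ℝ : ℝ) : EReal)
      ≤ (Θ xhat - Θ x - ((⟪ξ, xhat - x⟫_ℝ : ℝ) : EReal))
        + ((‖ξp - ξ‖ ^ 2 / (4 * c₀) - ⟪ξp - ξ, xhat - x⟫_ℝ : ℝ) : EReal) :=
  bregman_difference_bound_general Θ c₀ hc₀ hproper hsc x xp ξ ξp hξ xhat
end

section
/- Let Θ be proper, lower semi-continuous and strongly convex with modulus c₀ on a Hilbert space X, let A: X → Y be bounded linear, and let {αₙ} be a decreasing sequence of positive numbers. Consider the iteration ξ_{n+1} = ξₙ - tₙ A*(αₙ I + AA*)^{-1}(A xₙ - y), xₙ = argmin_x {Θ(x) - ⟨ξₙ, x⟩}, where tₙ = min{μ₀⟨(αₙ I + AA*)^{-1}(Axₙ - y), Axₙ - y⟩/‖A*(αₙ I + AA*)^{-1}(Axₙ - y)‖², μ₁} with 0 < μ₀ < 4c₀ and μ₁ > 0 (and tₙ arbitrary in [0, μ₁] if Axₙ = y). Then for any solution x̂ of Ax = y in the domain of Θ, the Bregman distances are monotone: D_{ξ_{n+1}}Θ(x̂,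 x_{n+1}) ≤ D_{ξₙ}Θ(x̂, xₙ), and more precisely (1 - μ₀/(4c₀)) tₙ ‖(αₙ I + AA*)^{-1/2}(Axₙ - y)‖² ≤ D_{ξₙ}Θ(x̂, xₙ) - D_{ξ_{n+1}}Θ(x̂, x_{n+1}). -/
open scoped InnerProductSpace
open ContinuousLinearMap

set_option maxHeartbeats 1000000 in
/-- Monotonicity of Bregman distances for the exact-data iteration
`ξ_{n+1} = ξₙ - tₙ A*(αₙI + AA*)⁻¹(Axₙ - y)`, `xₙ = argmin {Θ - ⟪ξₙ, ·⟫}`, with the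
min-rule step size (`0 < μ₀ < 4c₀`, `μ₁ > 0`). Here `S n` is the positive self-adjoint
square root of `αₙI + AA*` and `B n = (S n)⁻¹`, so `(αₙI + AA*)⁻¹ = B n ∘ B n`. -/
theorem exact_iteration_bregman_monotone
    {X Y : Type*} [NormedAddCommGroup X] [InnerProductSpace ℝ X] [CompleteSpace X]
    [NormedAddCommGroup Y] [InnerProductSpace ℝ Y] [CompleteSpace Y]
    (Θ : X → EReal) (c₀ : ℝ) (hc₀ : 0 < c₀)
    (hproper : (∀ z, Θ z ≠ ⊥) ∧ ∃ z, Θ z ≠ ⊤)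
    (hlsc : LowerSemicontinuous Θ)
    (hsc : ∀ (z x : X) (s : ℝ), 0 ≤ s → s ≤ 1 →
      Θ (s • z + (1 - s) • x) + ((c₀ * s * (1 - s) * ‖z - x‖ ^ 2 : ℝ) : EReal)
        ≤ (s : EReal) * Θ z + ((1 - s : ℝ) : EReal) * Θ x)
    (A : X →L[ℝ] Y) (y : Y)
    (α : ℕ → ℝ) (hαpos : ∀ n, 0 < α n) (hαdec : ∀ n, α (n + 1) ≤ α n)
    (S B : ℕ → (Y →L[ℝ] Y))
    (hSsa : ∀ n, IsSelfAdjoint (S n))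
    (hSpos : ∀ n, ∀ w : Y, 0 ≤ ⟪S n w, w⟫_ℝ)
    (hSsq : ∀ n, S n ∘L S n = α n • (1 : Y →L[ℝ] Y) + A ∘L ContinuousLinearMap.adjoint A)
    (hBS : ∀ n, B n ∘L S n = 1) (hSB : ∀ n, S n ∘L B n = 1)
    (μ₀ μ₁ : ℝ) (hμ₀ : 0 < μ₀) (hμ₀' : μ₀ < 4 * c₀) (hμ₁ : 0 < μ₁)
    (ξ x : ℕ → X) (t : ℕ → ℝ)
    (hargmin : ∀ n, ∀ z : X,
      Θ (x n) - ((⟪ξ n, x n⟫_ℝ : ℝ) : EReal) ≤ Θ z - ((⟪ξ n, z⟫_ℝ : ℝ) : EReal))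
    (ht : ∀ n, (A (x n) ≠ y →
        t n = min (μ₀ * ⟪B n (B n (A (x n) - y)), A (x n) - y⟫_ℝ /
          ‖ContinuousLinearMap.adjoint A (B n (B n (A (x n) - y)))‖ ^ 2) μ₁) ∧
      (A (x n) = y → 0 ≤ t n ∧ t n ≤ μ₁))
    (hiter : ∀ n, ξ (n + 1)
      = ξ n - t n • ContinuousLinearMap.adjoint A (B n (B n (A (x n) - y)))) :
    ∀ (xhat : X), A xhat = y → Θ xhat ≠ ⊤ → ∀ n,
      (Θ xhat - Θ (x (n + 1)) - ((⟪ξ (n + 1), xhat - x (n + 1)⟫_ℝ : ℝ) : EReal)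
        ≤ Θ xhat - Θ (x n) - ((⟪ξ n, xhat - x n⟫_ℝ : ℝ) : EReal)) ∧
      ((Θ xhat - Θ (x (n + 1)) - ((⟪ξ (n + 1), xhat - x (n + 1)⟫_ℝ : ℝ) : EReal))
          + (((1 - μ₀ / (4 * c₀)) * t n * ‖B n (A (x n) - y)‖ ^ 2 : ℝ) : EReal)
        ≤ Θ xhat - Θ (x n) - ((⟪ξ n, xhat - x n⟫_ℝ : ℝ) : EReal)) := by
  intro xhat hA hTop
  have hbot := hproper.1
  -- B is self-adjoint
  have hBsa : ∀ m, ContinuousLinearMap.adjoint (B m) = B m := by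
    intro m
    have h0 := congrArg ContinuousLinearMap.adjoint (hSB m)
    rw [ContinuousLinearMap.adjoint_comp, (hSsa m).adjoint_eq] at h0
    have h1 : ContinuousLinearMap.adjoint (B m) ∘L S m = 1 := by
      rw [h0, ContinuousLinearMap.one_def, ContinuousLinearMap.adjoint_id]
    calc ContinuousLinearMap.adjoint (B m)
        = (ContinuousLinearMap.adjoint (B m) ∘L S m) ∘L B m := by
          rw [ContinuousLinearMap.comp_assoc, hSB m, ContinuousLinearMap.one_def,
            ContinuousLinearMap.comp_id]
      _ = B m := by rw [h1, ContinuousLinearMap.one_def, ContinuousLinearMap.id_comp]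
  have hBB : ∀ m (w : Y), ⟪B m (B m w), w⟫_ℝ = ‖B m w‖ ^ 2 := by
    intro m w
    rw [← hBsa m, ContinuousLinearMap.adjoint_inner_left, hBsa m, real_inner_self_eq_norm_sq]
  -- the value at xhat is real
  have ha : (((Θ xhat).toReal : ℝ) : EReal) = Θ xhat := EReal.coe_toReal hTop (hbot xhat)
  -- Θ (x n) is finite for every n
  have hfin : ∀ n, Θ (x n) ≠ ⊤ := by
    intro n hn
    have h := hargmin n xhat
    rw [hn, ← ha, EReal.top_sub_coe, ← EReal.coe_sub] at h
    exact EReal.coe_ne_top _ (top_le_iff.mp h)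
  have hcoe : ∀ n, (((Θ (x n)).toReal : ℝ) : EReal) = Θ (x n) :=
    fun n => EReal.coe_toReal (hfin n) (hbot (x n))
  -- real version of argmin + quadratic growth at the minimizer
  have hgrow : ∀ n (z : X), Θ z ≠ ⊤ →
      (Θ (x n)).toReal - ⟪ξ n, x n⟫_ℝ + c₀ * ‖z - x n‖ ^ 2 ≤ (Θ z).toReal - ⟪ξ n, z⟫_ℝ := by
    intro n z hz
    have hzc : (((Θ z).toReal : ℝ) : EReal) = Θ z := EReal.coe_toReal hz (hbot z)
    have key : ∀ s : ℝ, 0 < s → s < 1 →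
        (Θ (x n)).toReal - ⟪ξ n, x n⟫_ℝ + c₀ * (1 - s) * ‖z - x n‖ ^ 2
          ≤ (Θ z).toReal - ⟪ξ n, z⟫_ℝ := by
      intro s hs hs1
      have hconv := hsc z (x n) s hs.le hs1.le
      rw [← hzc, ← hcoe n, ← EReal.coe_mul, ← EReal.coe_mul, ← EReal.coe_add] at hconv
      set w := s • z + (1 - s) • x n with hw
      have hwtop : Θ w ≠ ⊤ := by
        intro h
        rw [h, EReal.top_add_coe, top_le_iff] at hconv
        exact EReal.coe_ne_top _ hconv
      have hwc : (((Θ w).toReal : ℝ) : EReal) = Θ w := EReal.coe_toReal hwtop (hbot w)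
      rw [← hwc, ← EReal.coe_add, EReal.coe_le_coe_iff] at hconv
      have harg := hargmin n w
      rw [← hwc, ← hcoe n, ← EReal.coe_sub, ← EReal.coe_sub, EReal.coe_le_coe_iff] at harg
      have hinner : ⟪ξ n, w⟫_ℝ = s * ⟪ξ n, z⟫_ℝ + (1 - s) * ⟪ξ n, x n⟫_ℝ := by
        rw [hw, inner_add_right, real_inner_smul_right, real_inner_smul_right]
      rw [hinner] at harg
      have h3 : s * (((Θ (x n)).toReal - ⟪ξ n, x n⟫_ℝ + c₀ * (1 - s) * ‖z - x n‖ ^ 2)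
          - ((Θ z).toReal - ⟪ξ n, z⟫_ℝ)) ≤ 0 := by nlinarith [harg, hconv]
      by_contra hpos
      push_neg at hpos
      nlinarith [mul_pos hs (by linarith : (0:ℝ) <
        ((Θ (x n)).toReal - ⟪ξ n, x n⟫_ℝ + c₀ * (1 - s) * ‖z - x n‖ ^ 2)
          - ((Θ z).toReal - ⟪ξ n, z⟫_ℝ))]
    apply le_of_forall_pos_le_add
    intro ε hε
    have hNpos : 0 < c₀ * ‖z - x n‖ ^ 2 + 1 := by positivity
    set s : ℝ := min (1/2) (ε / (c₀ * ‖z - x n‖ ^ 2 + 1)) with hs_def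
    have hs0 : 0 < s := lt_min (by norm_num) (div_pos hε hNpos)
    have hs1 : s < 1 := lt_of_le_of_lt (min_le_left _ _) (by norm_num)
    have h1 := key s hs0 hs1
    have hsle : s * (c₀ * ‖z - x n‖ ^ 2 + 1) ≤ ε :=
      (le_div_iff₀ hNpos).mp (min_le_right _ _)
    nlinarith [h1, hsle, hs0.le]
  intro n
  set r := A (x n) - y with hr_def
  set v := ContinuousLinearMap.adjoint A (B n (B n r)) with hv_def
  set N := ‖B n r‖ ^ 2 with hN_def
  set k := μ₀ / (4 * c₀) with hk_def
  have hNnn : 0 ≤ N := by rw [hN_def]; positivity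
  -- step-size facts
  have hstep : 0 ≤ t n ∧ t n * ‖v‖ ^ 2 ≤ μ₀ * N := by
    by_cases hry : A (x n) = y
    · have hr0 : r = 0 := by rw [hr_def, hry, sub_self]
      have hv0 : v = 0 := by rw [hv_def, hr0, map_zero, map_zero, map_zero]
      have hN0 : N = 0 := by rw [hN_def, hr0, map_zero]; simp
      refine ⟨((ht n).2 hry).1, ?_⟩
      rw [hv0, hN0, norm_zero]
      simp
    · have htdef := (ht n).1 hry
      rw [← hr_def, ← hv_def, hBB n r, ← hN_def] at htdef
      by_cases hv0 : ‖v‖ = 0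
      · have ht00 : t n = 0 := by
          rw [htdef, hv0]
          simp [min_eq_left hμ₁.le]
        rw [ht00]
        constructor
        · exact le_refl 0
        · simpa using mul_nonneg hμ₀.le hNnn
      · have hq : 0 < ‖v‖ ^ 2 := by positivity
        constructor
        · rw [htdef]
          exact le_min (div_nonneg (mul_nonneg hμ₀.le hNnn) hq.le) hμ₁.le
        · have h1 : t n ≤ μ₀ * N / ‖v‖ ^ 2 := by rw [htdef]; exact min_le_left _ _
          calc t n * ‖v‖ ^ 2 ≤ (μ₀ * N / ‖v‖ ^ 2) * ‖v‖ ^ 2 :=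
                mul_le_mul_of_nonneg_right h1 hq.le
            _ = μ₀ * N := div_mul_cancel₀ _ hq.ne'
  obtain ⟨ht0, htq⟩ := hstep
  -- difference of dual variables
  have hΔ : ξ (n + 1) - ξ n = (-(t n)) • v := by
    rw [hv_def, hr_def, hiter n, neg_smul]; abel
  have hnormΔ : ‖ξ (n + 1) - ξ n‖ = t n * ‖v‖ := by
    rw [hΔ, norm_smul, norm_neg, Real.norm_eq_abs, abs_of_nonneg ht0]
  -- key inner products
  have hAxr : A (xhat - x n) = -r := by rw [map_sub, hA, hr_def, neg_sub]
  have hip : ⟪ξ (n + 1) - ξ n, xhat - x n⟫_ℝ = t n * N := by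
    rw [hΔ, real_inner_smul_left, hv_def, ContinuousLinearMap.adjoint_inner_left, hAxr,
      inner_neg_right, hBB n r, ← hN_def]
    ring
  have hCS : ⟪ξ (n + 1) - ξ n, x (n + 1) - x n⟫_ℝ ≤ t n * ‖v‖ * ‖x (n + 1) - x n‖ := by
    calc ⟪ξ (n + 1) - ξ n, x (n + 1) - x n⟫_ℝ
        ≤ ‖ξ (n + 1) - ξ n‖ * ‖x (n + 1) - x n‖ := real_inner_le_norm _ _
      _ = t n * ‖v‖ * ‖x (n + 1) - x n‖ := by rw [hnormΔ]
  set d := ‖x (n + 1) - x n‖ with hd_def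
  have hq3 := hgrow n (x (n + 1)) (hfin (n + 1))
  -- scalar nonlinear facts
  have hk4 : k * (t n * N) * (4 * c₀) = μ₀ * (t n * N) := by
    rw [hk_def]; field_simp
  have h4 : t n * ‖v‖ * d * (4 * c₀) ≤ (c₀ * d ^ 2 + k * (t n * N)) * (4 * c₀) := by
    nlinarith [sq_nonneg (t n * ‖v‖ - 2 * c₀ * d), mul_le_mul_of_nonneg_left htq ht0, hk4]
  have amgm : t n * ‖v‖ * d ≤ c₀ * d ^ 2 + k * (t n * N) :=
    le_of_mul_le_mul_right h4 (by positivity)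
  -- main real inequality
  have main : ((Θ xhat).toReal - (Θ (x (n + 1))).toReal - ⟪ξ (n + 1), xhat - x (n + 1)⟫_ℝ)
      + (1 - k) * t n * N
      ≤ (Θ xhat).toReal - (Θ (x n)).toReal - ⟪ξ n, xhat - x n⟫_ℝ := by
    simp only [inner_sub_left, inner_sub_right] at hip hCS ⊢
    linarith [hip, hCS, hq3, amgm]
  have hextra : 0 ≤ (1 - k) * t n * N := by
    have hk1 : k < 1 := by rw [hk_def]; exact (div_lt_one (by positivity)).mpr hμ₀'
    exact mul_nonneg (mul_nonneg (by linarith) ht0) hNnn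
  constructor
  · rw [← ha, ← hcoe n, ← hcoe (n + 1)]
    have : ((Θ xhat).toReal - (Θ (x (n + 1))).toReal - ⟪ξ (n + 1), xhat - x (n + 1)⟫_ℝ)
        ≤ (Θ xhat).toReal - (Θ (x n)).toReal - ⟪ξ n, xhat - x n⟫_ℝ := by linarith
    exact_mod_cast this
  · rw [← ha, ← hcoe n, ← hcoe (n + 1)]
    exact_mod_cast main
end

section
/- Under the hypotheses of the monotonicity lemma for the exact-data iteration (tₙ chosen by the min-rule with 0 < μ₀ < 4c₀, μ₁ > 0, {αₙ} decreasing positive), one has ∑_{n=0}^∞ tₙ‖(αₙ I + AA*)^{-1/2}(Axₙ - y)‖² ≤ D_{ξ₀}Θ(x̂, x₀)/(1 - μ₀/(4c₀)) < ∞, and consequently ‖(αₙ I + AA*)^{-1/2}(Axₙ - y)‖ → 0 and ‖Axₙ - y‖ → 0 as n → ∞. -/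
set_option maxHeartbeats 1000000

open scoped InnerProductSpace
open ContinuousLinearMap

private lemma amgm_aux (a b c₀ : ℝ) (hc : 0 < c₀) : a * b - c₀ * b ^ 2 ≤ a ^ 2 / (4 * c₀) := by
  rw [le_div_iff₀ (by linarith)]
  nlinarith [sq_nonneg (a - 2 * c₀ * b)]

private lemma key_aux (θn θn1 θm p q s d c₀ ε : ℝ) (hs0 : 0 < s)
    (hse : c₀ * s * d ≤ ε)
    (hm : θm + c₀ * s * (1 - s) * d ≤ s * θn1 + (1 - s) * θn)
    (ham : θn - q ≤ θm - (s * p + (1 - s) * q)) :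
    θn + (p - q) + c₀ * d ≤ θn1 + ε := by
  have hcomb : s * (θn + p - q + c₀ * (1 - s) * d) ≤ s * θn1 := by nlinarith
  have hdiv : θn + p - q + c₀ * (1 - s) * d ≤ θn1 :=
    le_of_mul_le_mul_left (by linarith [hcomb]) hs0
  nlinarith

private lemma step_aux (θh θn θn1 a1 a2 a3 b1 b2 b3 N G D T c₀ μ₀ : ℝ)
    (hc₀ : 0 < c₀) (hT : 0 ≤ T)
    (e1 : θn + (a1 - a2) + c₀ * D ^ 2 ≤ θn1)
    (e3 : b2 - b1 = N)
    (e4 : -(G * D) ≤ b3 - b2)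
    (e6 : (T * G) ^ 2 ≤ T * (μ₀ * N)) :
    (θh - θn1 - (a3 - a1 - T * b1 + T * b3)) + (1 - μ₀ / (4 * c₀)) * (T * N)
      ≤ θh - θn - (a3 - a2) := by
  have e5 : (T * G) * D - c₀ * D ^ 2 ≤ (T * G) ^ 2 / (4 * c₀) := amgm_aux _ _ _ hc₀
  have e7 : -(T * (G * D)) ≤ T * (b3 - b2) := by nlinarith
  have hc4 : (0 : ℝ) < 4 * c₀ := by linarith
  have e8 : (T * G) ^ 2 / (4 * c₀) ≤ T * (μ₀ * N) / (4 * c₀) := by gcongr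
  have hκ : (1 - μ₀ / (4 * c₀)) * (T * N) = T * N - T * (μ₀ * N) / (4 * c₀) := by
    field_simp
  have e9 : T * b2 - T * b1 = T * N := by rw [← e3]; ring
  have e10 : T * (b3 - b2) = T * b3 - T * b2 := by ring
  have e11 : T * (G * D) = (T * G) * D := by ring
  linarith

/-- For the exact-data iteration with min-rule step sizes, the weighted sum
of preconditioned residuals is finite and bounded by `D_{ξ₀}Θ(x̂,x₀)/(1 - μ₀/(4c₀))`,
hence `‖(αₙI+AA*)^{-1/2}(Axₙ - y)‖ → 0` and `‖Axₙ - y‖ → 0`. Iteration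
`ξ_{n+1} = ξₙ - tₙ A*(αₙI + AA*)⁻¹(Axₙ - y)`, `xₙ = argmin {Θ - ⟪ξₙ, ·⟫}`, with the
min-rule step size (`0 < μ₀ < 4c₀`, `μ₁ > 0`). Here `S n` is the positive self-adjoint
square root of `αₙI + AA*` and `B n = (S n)⁻¹`, so `(αₙI + AA*)⁻¹ = B n ∘ B n`. -/
theorem exact_iteration_residual_tendsto_zero
    {X Y : Type*} [NormedAddCommGroup X] [InnerProductSpace ℝ X] [CompleteSpace X]
    [NormedAddCommGroup Y] [InnerProductSpace ℝ Y] [CompleteSpace Y]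
    (Θ : X → EReal) (c₀ : ℝ) (hc₀ : 0 < c₀)
    (hproper : (∀ z, Θ z ≠ ⊥) ∧ ∃ z, Θ z ≠ ⊤)
    (hlsc : LowerSemicontinuous Θ)
    (hsc : ∀ (z x : X) (s : ℝ), 0 ≤ s → s ≤ 1 →
      Θ (s • z + (1 - s) • x) + ((c₀ * s * (1 - s) * ‖z - x‖ ^ 2 : ℝ) : EReal)
        ≤ (s : EReal) * Θ z + ((1 - s : ℝ) : EReal) * Θ x)
    (A : X →L[ℝ] Y) (y : Y)
    (α : ℕ → ℝ) (hαpos : ∀ n, 0 < α n) (hαdec : ∀ n, α (n + 1) ≤ α n)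
    (S B : ℕ → (Y →L[ℝ] Y))
    (hSsa : ∀ n, IsSelfAdjoint (S n))
    (hSpos : ∀ n, ∀ w : Y, 0 ≤ ⟪S n w, w⟫_ℝ)
    (hSsq : ∀ n, S n ∘L S n = α n • (1 : Y →L[ℝ] Y) + A ∘L ContinuousLinearMap.adjoint A)
    (hBS : ∀ n, B n ∘L S n = 1) (hSB : ∀ n, S n ∘L B n = 1)
    (μ₀ μ₁ : ℝ) (hμ₀ : 0 < μ₀) (hμ₀' : μ₀ < 4 * c₀) (hμ₁ : 0 < μ₁)
    (ξ x : ℕ → X) (t : ℕ → ℝ)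
    (hargmin : ∀ n, ∀ z : X,
      Θ (x n) - ((⟪ξ n, x n⟫_ℝ : ℝ) : EReal) ≤ Θ z - ((⟪ξ n, z⟫_ℝ : ℝ) : EReal))
    (ht : ∀ n, (A (x n) ≠ y →
        t n = min (μ₀ * ⟪B n (B n (A (x n) - y)), A (x n) - y⟫_ℝ /
          ‖ContinuousLinearMap.adjoint A (B n (B n (A (x n) - y)))‖ ^ 2) μ₁) ∧
      (A (x n) = y → 0 ≤ t n ∧ t n ≤ μ₁))
    (hiter : ∀ n, ξ (n + 1)
      = ξ n - t n • ContinuousLinearMap.adjoint A (B n (B n (A (x n) - y))))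
    (xhat : X) (hsol : A xhat = y) (hdom : Θ xhat ≠ ⊤) :
    Summable (fun n => t n * ‖B n (A (x n) - y)‖ ^ 2) ∧
    ((((1 - μ₀ / (4 * c₀)) * ∑' n, t n * ‖B n (A (x n) - y)‖ ^ 2 : ℝ)) : EReal)
      ≤ Θ xhat - Θ (x 0) - ((⟪ξ 0, xhat - x 0⟫_ℝ : ℝ) : EReal) ∧
    Filter.Tendsto (fun n => ‖B n (A (x n) - y)‖) Filter.atTop (nhds 0) ∧
    Filter.Tendsto (fun n => ‖A (x n) - y‖) Filter.atTop (nhds 0) := by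
  set κ : ℝ := 1 - μ₀ / (4 * c₀) with hκdef
  have hκ : 0 < κ := by
    have : μ₀ / (4 * c₀) < 1 := (div_lt_one (by linarith)).2 hμ₀'
    simp [hκdef]; linarith
  set r : ℕ → Y := fun n => A (x n) - y with hrdef
  set w : ℕ → Y := fun n => B n (B n (r n)) with hwdef
  set g : ℕ → X := fun n => ContinuousLinearMap.adjoint A (w n) with hgdef
  -- finiteness
  have hhat : Θ xhat = ((Θ xhat).toReal : EReal) := (EReal.coe_toReal hdom (hproper.1 xhat)).symm
  set θh : ℝ := (Θ xhat).toReal with hθh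
  -- Θ (x n) is real
  have hfin : ∀ n, Θ (x n) = (((Θ (x n)).toReal : ℝ) : EReal) := by
    intro n
    refine (EReal.coe_toReal ?_ (hproper.1 _)).symm
    intro htop
    have h := hargmin n xhat
    rw [htop, hhat, EReal.top_sub_coe, ← EReal.coe_sub] at h
    exact (EReal.coe_lt_top _).not_ge h
  set θ : ℕ → ℝ := fun n => (Θ (x n)).toReal with hθdef
  -- real argmin inequality against xhat
  have hargm : ∀ n, θ n - ⟪ξ n, x n⟫_ℝ ≤ θh - ⟪ξ n, xhat⟫_ℝ := by
    intro n
    have h := hargmin n xhat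
    rw [hfin n, hhat, ← EReal.coe_sub, ← EReal.coe_sub, EReal.coe_le_coe_iff] at h
    exact h
  set Δ : ℕ → ℝ := fun n => θh - θ n - ⟪ξ n, xhat - x n⟫_ℝ with hΔdef
  have hΔnonneg : ∀ n, 0 ≤ Δ n := by
    intro n
    have h := hargm n
    simp only [hΔdef, inner_sub_right]
    linarith
  -- selfadjoint facts
  have hSadj : ∀ n, ContinuousLinearMap.adjoint (S n) = S n := fun n => (hSsa n).adjoint_eq
  have hBadj : ∀ n, ContinuousLinearMap.adjoint (B n) = B n := by
    intro n
    have h1 : ContinuousLinearMap.adjoint (B n) ∘L S n = 1 := by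
      have := congrArg (fun T : Y →L[ℝ] Y => ContinuousLinearMap.adjoint T) (hSB n)
      simpa [adjoint_comp, hSadj, ContinuousLinearMap.one_def, adjoint_id] using this
    calc ContinuousLinearMap.adjoint (B n)
        = (ContinuousLinearMap.adjoint (B n) ∘L S n) ∘L B n := by
          rw [ContinuousLinearMap.comp_assoc, hSB n]; rfl
      _ = B n := by rw [h1]; rfl
  have hSBv : ∀ n (v : Y), S n (B n v) = v := by
    intro n v
    have := congrArg (fun (T : Y →L[ℝ] Y) => T v) (hSB n)
    simpa using this
  -- ⟪B (B v), v⟫ = ‖B v‖²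
  have hBBv : ∀ n (v : Y), ⟪B n (B n v), v⟫_ℝ = ‖B n v‖ ^ 2 := by
    intro n v
    rw [← hBadj n, adjoint_inner_left, hBadj n, real_inner_self_eq_norm_sq]
  -- ‖A* (B v)‖² + α n ‖B v‖² = ‖v‖²
  have hABv : ∀ n (v : Y),
      ‖ContinuousLinearMap.adjoint A (B n v)‖ ^ 2 + α n * ‖B n v‖ ^ 2 = ‖v‖ ^ 2 := by
    intro n v
    have h1 : A (ContinuousLinearMap.adjoint A (B n v)) = S n v - α n • (B n v) := by
      have := congrArg (fun (T : Y →L[ℝ] Y) => T (B n v)) (hSsq n)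
      simp only [ContinuousLinearMap.comp_apply, ContinuousLinearMap.add_apply,
        ContinuousLinearMap.smul_apply, ContinuousLinearMap.one_apply] at this
      rw [hSBv n] at this
      rw [this]; abel
    have h2 : ‖ContinuousLinearMap.adjoint A (B n v)‖ ^ 2
        = ⟪B n v, S n v⟫_ℝ - α n * ‖B n v‖ ^ 2 := by
      rw [← real_inner_self_eq_norm_sq, adjoint_inner_left, h1, inner_sub_right,
        real_inner_smul_right, real_inner_self_eq_norm_sq]
    have h3 : ⟪B n v, S n v⟫_ℝ = ‖v‖ ^ 2 := by
      have h := adjoint_inner_left (S n) v (B n v)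
      rw [hSadj n, hSBv n] at h
      rw [← h, real_inner_self_eq_norm_sq]
    rw [h2, h3]; ring
  -- ⟪g n, x n - xhat⟫ = ‖B n (r n)‖²
  have hgx : ∀ n, ⟪g n, x n - xhat⟫_ℝ = ‖B n (r n)‖ ^ 2 := by
    intro n
    rw [hgdef, adjoint_inner_left, map_sub, hsol]
    exact hBBv n (r n)
  -- r n ≠ 0 → g n ≠ 0
  have hgne : ∀ n, r n ≠ 0 → g n ≠ 0 := by
    intro n hr hg
    have h1 : ‖B n (r n)‖ ^ 2 = 0 := by rw [← hgx n, hg, inner_zero_left]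
    have h2 : B n (r n) = 0 := by
      simpa using (pow_eq_zero_iff (n := 2) (by norm_num)).1 h1
    exact hr (by rw [← hSBv n (r n), h2, map_zero])
  -- step size facts
  have htfact : ∀ n, 0 ≤ t n ∧ t n * ‖g n‖ ^ 2 ≤ μ₀ * ‖B n (r n)‖ ^ 2 := by
    intro n
    by_cases hr : A (x n) = y
    · have hr0 : r n = 0 := by simp [hrdef, hr]
      have hw0 : g n = 0 := by simp [hgdef, hwdef, hr0]
      refine ⟨((ht n).2 hr).1, ?_⟩
      rw [hw0]
      simp [hr0]
    · have hteq := (ht n).1 hr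
      have hrne : r n ≠ 0 := sub_ne_zero.2 hr
      have hgn : g n ≠ 0 := hgne n hrne
      have hgpos : 0 < ‖g n‖ ^ 2 := pow_pos (norm_pos_iff.mpr hgn) 2
      rw [hBBv n (r n)] at hteq
      constructor
      · rw [hteq]
        exact le_min (by positivity) hμ₁.le
      · have h1 : t n ≤ μ₀ * ‖B n (r n)‖ ^ 2 / ‖g n‖ ^ 2 := hteq ▸ min_le_left _ _
        calc t n * ‖g n‖ ^ 2 ≤ (μ₀ * ‖B n (r n)‖ ^ 2 / ‖g n‖ ^ 2) * ‖g n‖ ^ 2 :=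
              mul_le_mul_of_nonneg_right h1 hgpos.le
          _ = μ₀ * ‖B n (r n)‖ ^ 2 := div_mul_cancel₀ _ hgpos.ne'
  -- lower bound on step size when residual nonzero
  have htlow : ∀ n, r n ≠ 0 → min μ₀ μ₁ ≤ t n := by
    intro n hrne
    have hr : A (x n) ≠ y := fun h => hrne (by simp [hrdef, h])
    have hteq := (ht n).1 hr
    rw [hBBv n (r n)] at hteq
    have hgn : g n ≠ 0 := hgne n hrne
    have hgpos : 0 < ‖g n‖ ^ 2 := pow_pos (norm_pos_iff.mpr hgn) 2
    have hle : ‖g n‖ ^ 2 ≤ ‖B n (r n)‖ ^ 2 := by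
      have h := hABv n (B n (r n))
      have h2 : 0 ≤ α n * ‖B n (B n (r n))‖ ^ 2 := by
        have := hαpos n
        positivity
      rw [hgdef]
      simp only [hwdef]
      nlinarith
    have hq : μ₀ ≤ μ₀ * ‖B n (r n)‖ ^ 2 / ‖g n‖ ^ 2 := by
      rw [le_div_iff₀ hgpos]
      nlinarith
    rw [hteq]
    exact min_le_min hq le_rfl
  -- strong convexity key inequality between consecutive argmins
  have hkey : ∀ n, θ n + ⟪ξ n, x (n + 1) - x n⟫_ℝ + c₀ * ‖x (n + 1) - x n‖ ^ 2 ≤ θ (n + 1) := by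
    intro n
    refine le_of_forall_pos_le_add (fun ε hε => ?_)
    set d : ℝ := ‖x (n + 1) - x n‖ ^ 2 with hd
    have hdnn : 0 ≤ d := by positivity
    set s : ℝ := min 1 (ε / (c₀ * d + 1)) with hs
    have hs0 : 0 < s := lt_min one_pos (by positivity)
    have hs1 : s ≤ 1 := min_le_left _ _
    have hse : c₀ * s * d ≤ ε := by
      have h1 : s ≤ ε / (c₀ * d + 1) := min_le_right _ _
      have h2 : c₀ * d + 1 > 0 := by positivity
      have h3 : s * (c₀ * d + 1) ≤ ε := by
        rw [← le_div_iff₀ h2]; exact h1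
      nlinarith [hs0.le, hdnn, h3, hc₀.le]
    have hm := hsc (x (n + 1)) (x n) s hs0.le hs1
    set m : X := s • x (n + 1) + (1 - s) • x n with hmdef
    have hrhs : (s : EReal) * Θ (x (n + 1)) + ((1 - s : ℝ) : EReal) * Θ (x n)
        = (((s * θ (n + 1) + (1 - s) * θ n : ℝ)) : EReal) := by
      rw [hfin (n + 1), hfin n, ← EReal.coe_mul, ← EReal.coe_mul, ← EReal.coe_add]
    rw [hrhs] at hm
    have hmtop : Θ m ≠ ⊤ := by
      intro htop
      rw [htop] at hm
      have h4 : (⊤ : EReal) + ((c₀ * s * (1 - s) * d : ℝ) : EReal) = ⊤ :=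
        EReal.top_add_of_ne_bot (EReal.coe_ne_bot _)
      rw [h4] at hm
      exact (EReal.coe_lt_top _).not_ge hm
    have hmbot := hproper.1 m
    set θm : ℝ := (Θ m).toReal with hθm
    have hmeq : Θ m = (θm : EReal) := (EReal.coe_toReal hmtop hmbot).symm
    rw [hmeq, ← EReal.coe_add, EReal.coe_le_coe_iff] at hm
    have ham := hargmin n m
    rw [hfin n, hmeq, ← EReal.coe_sub, ← EReal.coe_sub, EReal.coe_le_coe_iff] at ham
    have hinner : ⟪ξ n, m⟫_ℝ = s * ⟪ξ n, x (n + 1)⟫_ℝ + (1 - s) * ⟪ξ n, x n⟫_ℝ := by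
      rw [hmdef, inner_add_right, real_inner_smul_right, real_inner_smul_right]
    rw [hinner] at ham
    rw [inner_sub_right]
    exact key_aux (θ n) (θ (n + 1)) θm _ _ s d c₀ ε hs0 hse hm ham
  -- the main per-step decrease
  have hstep : ∀ n, Δ (n + 1) + κ * (t n * ‖B n (r n)‖ ^ 2) ≤ Δ n := by
    intro n
    obtain ⟨htn0, htn1⟩ := htfact n
    have e1 : θ n + (⟪ξ n, x (n + 1)⟫_ℝ - ⟪ξ n, x n⟫_ℝ) + c₀ * ‖x (n + 1) - x n‖ ^ 2
        ≤ θ (n + 1) := by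
      have h := hkey n
      rw [inner_sub_right] at h
      linarith
    have e2 : ⟪ξ (n + 1), xhat - x (n + 1)⟫_ℝ
        = ⟪ξ n, xhat⟫_ℝ - ⟪ξ n, x (n + 1)⟫_ℝ - t n * ⟪g n, xhat⟫_ℝ
          + t n * ⟪g n, x (n + 1)⟫_ℝ := by
      rw [hiter n]
      simp only [inner_sub_left, inner_sub_right, real_inner_smul_left]
      ring
    have e3 : ⟪g n, x n⟫_ℝ - ⟪g n, xhat⟫_ℝ = ‖B n (r n)‖ ^ 2 := by
      rw [← hgx n, inner_sub_right]
    have e4 : -(‖g n‖ * ‖x (n + 1) - x n‖) ≤ ⟪g n, x (n + 1)⟫_ℝ - ⟪g n, x n⟫_ℝ := by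
      have h := real_inner_le_norm (g n) (x n - x (n + 1))
      rw [inner_sub_right, norm_sub_rev] at h
      linarith
    have e6 : (t n * ‖g n‖) ^ 2 ≤ t n * (μ₀ * ‖B n (r n)‖ ^ 2) := by
      have h : (t n * ‖g n‖) ^ 2 = t n * (t n * ‖g n‖ ^ 2) := by ring
      rw [h]
      exact mul_le_mul_of_nonneg_left htn1 htn0
    have hgoal := step_aux θh (θ n) (θ (n + 1)) (⟪ξ n, x (n + 1)⟫_ℝ) (⟪ξ n, x n⟫_ℝ)
      (⟪ξ n, xhat⟫_ℝ) (⟪g n, xhat⟫_ℝ) (⟪g n, x n⟫_ℝ) (⟪g n, x (n + 1)⟫_ℝ)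
      (‖B n (r n)‖ ^ 2) (‖g n‖) (‖x (n + 1) - x n‖) (t n) c₀ μ₀ hc₀ htn0 e1 e3 e4 e6
    simp only [hΔdef]
    rw [e2, inner_sub_right]
    exact hgoal
  -- telescoping bound, summability
  set u : ℕ → ℝ := fun n => t n * ‖B n (r n)‖ ^ 2 with hudef
  have hunn : ∀ n, 0 ≤ u n := fun n => mul_nonneg (htfact n).1 (by positivity)
  have hpartial : ∀ N, κ * ∑ i ∈ Finset.range N, u i ≤ Δ 0 := by
    intro N
    have h1 : ∑ i ∈ Finset.range N, κ * u i ≤ ∑ i ∈ Finset.range N, (Δ i - Δ (i + 1)) :=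
      Finset.sum_le_sum (fun i _ => by
        show κ * u i ≤ Δ i - Δ (i + 1)
        have hui : u i = t i * ‖B i (r i)‖ ^ 2 := rfl
        rw [hui]
        linarith [hstep i])
    rw [Finset.sum_range_sub' Δ N] at h1
    rw [Finset.mul_sum]
    linarith [hΔnonneg N]
  have hpartial' : ∀ N, ∑ i ∈ Finset.range N, u i ≤ Δ 0 / κ := by
    intro N
    rw [le_div_iff₀ hκ]
    linarith [hpartial N]
  have hsummable : Summable u := summable_of_sum_range_le hunn hpartial'
  have htsum : κ * ∑' n, u n ≤ Δ 0 := by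
    have h := Summable.tsum_le_of_sum_range_le hsummable hpartial'
    rw [← le_div_iff₀' hκ]
    exact h
  refine ⟨hsummable, ?_, ?_, ?_⟩
  · -- EReal inequality
    rw [hfin 0, hhat, ← EReal.coe_sub, ← EReal.coe_sub, EReal.coe_le_coe_iff]
    exact htsum
  · -- ‖B n (r n)‖ → 0
    set μ : ℝ := min μ₀ μ₁ with hμ
    have hμpos : 0 < μ := lt_min hμ₀ hμ₁
    have hb : ∀ n, ‖B n (r n)‖ ^ 2 ≤ u n / μ := by
      intro n
      by_cases hrn : r n = 0
      · rw [hrn]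
        simpa using div_nonneg (hunn n) hμpos.le
      · rw [le_div_iff₀ hμpos]
        have hun : u n = t n * ‖B n (r n)‖ ^ 2 := rfl
        have h := htlow n hrn
        have : μ * ‖B n (r n)‖ ^ 2 ≤ t n * ‖B n (r n)‖ ^ 2 :=
          mul_le_mul_of_nonneg_right h (by positivity)
        linarith
    have h0 : Filter.Tendsto (fun n => u n / μ) Filter.atTop (nhds 0) := by
      have := hsummable.tendsto_atTop_zero.div_const μ
      simpa using this
    have hsq : Filter.Tendsto (fun n => ‖B n (r n)‖ ^ 2) Filter.atTop (nhds 0) :=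
      squeeze_zero (fun n => by positivity) hb h0
    have := hsq.sqrt
    simp only [Real.sqrt_zero] at this
    convert this using 2 with n
    rw [Real.sqrt_sq (norm_nonneg _)]
  · -- ‖r n‖ → 0
    set μ : ℝ := min μ₀ μ₁ with hμ
    have hμpos : 0 < μ := lt_min hμ₀ hμ₁
    have hαle : ∀ n, α n ≤ α 0 := by
      intro n
      induction n with
      | zero => exact le_rfl
      | succ k ih => exact (hαdec k).trans ih
    have hb : ∀ n, ‖r n‖ ^ 2 ≤ (α 0 + ‖ContinuousLinearMap.adjoint A‖ ^ 2) * ‖B n (r n)‖ ^ 2 := by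
      intro n
      have h := hABv n (r n)
      have h2 : ‖ContinuousLinearMap.adjoint A (B n (r n))‖ ^ 2
          ≤ ‖ContinuousLinearMap.adjoint A‖ ^ 2 * ‖B n (r n)‖ ^ 2 := by
        have := (ContinuousLinearMap.adjoint A).le_opNorm (B n (r n))
        nlinarith [norm_nonneg (ContinuousLinearMap.adjoint A (B n (r n))),
          norm_nonneg (ContinuousLinearMap.adjoint A), norm_nonneg (B n (r n))]
      have h3 : α n * ‖B n (r n)‖ ^ 2 ≤ α 0 * ‖B n (r n)‖ ^ 2 :=
        mul_le_mul_of_nonneg_right (hαle n) (by positivity)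
      nlinarith
    have hb' : ∀ n, ‖B n (r n)‖ ^ 2 ≤ u n / μ := by
      intro n
      by_cases hrn : r n = 0
      · rw [hrn]
        simpa using div_nonneg (hunn n) hμpos.le
      · rw [le_div_iff₀ hμpos]
        have hun : u n = t n * ‖B n (r n)‖ ^ 2 := rfl
        have h := htlow n hrn
        have : μ * ‖B n (r n)‖ ^ 2 ≤ t n * ‖B n (r n)‖ ^ 2 :=
          mul_le_mul_of_nonneg_right h (by positivity)
        linarith
    have h0 : Filter.Tendsto (fun n => (α 0 + ‖ContinuousLinearMap.adjoint A‖ ^ 2) * (u n / μ))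
        Filter.atTop (nhds 0) := by
      have := (hsummable.tendsto_atTop_zero.div_const μ).const_mul
        (α 0 + ‖ContinuousLinearMap.adjoint A‖ ^ 2)
      simpa using this
    have hsq : Filter.Tendsto (fun n => ‖r n‖ ^ 2) Filter.atTop (nhds 0) := by
      refine squeeze_zero (fun n => by positivity) (fun n => ?_) h0
      calc ‖r n‖ ^ 2 ≤ (α 0 + ‖ContinuousLinearMap.adjoint A‖ ^ 2) * ‖B n (r n)‖ ^ 2 := hb n
        _ ≤ (α 0 + ‖ContinuousLinearMap.adjoint A‖ ^ 2) * (u n / μ) := by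
            have hcnn : 0 ≤ α 0 + ‖ContinuousLinearMap.adjoint A‖ ^ 2 := by
              have := hαpos 0
              positivity
            exact mul_le_mul_of_nonneg_left (hb' n) hcnn
    have := hsq.sqrt
    simp only [Real.sqrt_zero] at this
    convert this using 2 with n
    rw [Real.sqrt_sq (norm_nonneg _)]
end

section
/- Let X, Y be Hilbert spaces, A: X → Y bounded linear, Θ: X → (-∞,∞] proper, lower semi-continuous and strongly convex. Suppose sequences {xₙ}, {ξₙ} ⊂ X satisfy: (i) ξₙ ∈ ∂Θ(xₙ) for all n; (ii) for every solution x̂ of Ax = y in dom(Θ), the sequence {D_{ξₙ}Θ(x̂, xₙ)} is monotonically decreasing; (iii) ‖Axₙ - y‖ → 0; (iv) there is a subsequence {n_k}, n_k → ∞, such that lim_{l→∞} sup_{k≥l} |⟨ξ_{n_k} - ξ_{n_l}, x_{n_k} - x̂⟩| = 0 for every such x̂. Then there exists a solution x* of Ax = y in dom(Θ) with lim_{n→∞} D_{ξₙ}Θ(x*, xₙ) = 0. -/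
open scoped InnerProductSpace

/-- If `ξₙ ∈ ∂Θ(xₙ)`, the Bregman distances to every solution of `Ax = y`
in `dom Θ` decrease monotonically, `‖Axₙ - y‖ → 0`, and along some subsequence `n_k → ∞`
one has `lim_l sup_{k ≥ l} |⟪ξ_{n_k} - ξ_{n_l}, x_{n_k} - x̂⟫| = 0` for every such
solution, then there exists a solution `x*` of `Ax = y` in `dom Θ` with
`D_{ξₙ}Θ(x*, xₙ) → 0`. -/
theorem bregman_convergence_proposition
    {X Y : Type*} [NormedAddCommGroup X] [InnerProductSpace ℝ X] [CompleteSpace X]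
    [NormedAddCommGroup Y] [InnerProductSpace ℝ Y] [CompleteSpace Y]
    (Θ : X → EReal) (c₀ : ℝ) (hc₀ : 0 < c₀)
    (hproper : (∀ z, Θ z ≠ ⊥) ∧ ∃ z, Θ z ≠ ⊤)
    (hlsc : LowerSemicontinuous Θ)
    (hsc : ∀ (z x : X) (s : ℝ), 0 ≤ s → s ≤ 1 →
      Θ (s • z + (1 - s) • x) + ((c₀ * s * (1 - s) * ‖z - x‖ ^ 2 : ℝ) : EReal)
        ≤ (s : EReal) * Θ z + ((1 - s : ℝ) : EReal) * Θ x)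
    (A : X →L[ℝ] Y) (y : Y)
    (hex : ∃ xhat : X, A xhat = y ∧ Θ xhat ≠ ⊤)
    (x ξ : ℕ → X)
    (hsub : ∀ n, ∀ z, Θ (x n) + ((⟪ξ n, z - x n⟫_ℝ : ℝ) : EReal) ≤ Θ z)
    (hmono : ∀ (xhat : X), A xhat = y → Θ xhat ≠ ⊤ → ∀ n,
      Θ xhat - Θ (x (n + 1)) - ((⟪ξ (n + 1), xhat - x (n + 1)⟫_ℝ : ℝ) : EReal)
        ≤ Θ xhat - Θ (x n) - ((⟪ξ n, xhat - x n⟫_ℝ : ℝ) : EReal))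
    (hres : Filter.Tendsto (fun n => ‖A (x n) - y‖) Filter.atTop (nhds 0))
    (nk : ℕ → ℕ) (hnk : StrictMono nk)
    (hsup : ∀ (xhat : X), A xhat = y → Θ xhat ≠ ⊤ → ∀ ε > (0 : ℝ), ∃ L, ∀ l, L ≤ l →
      ∀ k, l ≤ k → |⟪ξ (nk k) - ξ (nk l), x (nk k) - xhat⟫_ℝ| ≤ ε) :
    ∃ xstar : X, A xstar = y ∧ Θ xstar ≠ ⊤ ∧
      Filter.Tendsto
        (fun n => Θ xstar - Θ (x n) - ((⟪ξ n, xstar - x n⟫_ℝ : ℝ) : EReal))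
        Filter.atTop (nhds (0 : EReal)) := by
  obtain ⟨xh, hAxh, hxhT⟩ := hex
  have hbot := hproper.1
  -- Θ (x n) is finite
  have hfin : ∀ n, Θ (x n) ≠ ⊤ := by
    intro n hT
    have h := hsub n xh
    rw [hT, EReal.top_add_coe] at h
    exact hxhT (top_le_iff.mp h)
  set f : ℕ → ℝ := fun n => (Θ (x n)).toReal with hf
  clear_value f
  have hcoe : ∀ n, Θ (x n) = ((f n : ℝ) : EReal) := by
    intro n
    simp only [hf]
    exact (EReal.coe_toReal (hfin n) (hbot _)).symm
  -- real subgradient inequality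
  have hsubR : ∀ n (z : X), Θ z ≠ ⊤ →
      f n + ⟪ξ n, z - x n⟫_ℝ ≤ (Θ z).toReal := by
    intro n z hz
    have h := hsub n z
    rw [hcoe n, ← EReal.coe_add, ← EReal.coe_toReal hz (hbot z)] at h
    exact EReal.coe_le_coe_iff.mp h
  -- Bregman expression as real coercion
  have hDcoe : ∀ (z : X), Θ z ≠ ⊤ → ∀ n,
      Θ z - Θ (x n) - ((⟪ξ n, z - x n⟫_ℝ : ℝ) : EReal)
        = (((Θ z).toReal - f n - ⟪ξ n, z - x n⟫_ℝ : ℝ) : EReal) := by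
    intro z hz n
    conv_lhs => rw [hcoe n, ← EReal.coe_toReal hz (hbot z)]
    rw [← EReal.coe_sub, ← EReal.coe_sub]
  -- key strong-convexity estimate
  have key : ∀ n (u : X), Θ u ≠ ⊤ →
      c₀ / 2 * ‖u - x n‖ ^ 2 ≤ (Θ u).toReal - f n - ⟪ξ n, u - x n⟫_ℝ := by
    intro n u hu
    have h := hsc u (x n) (1 / 2) (by norm_num) (by norm_num)
    rw [hcoe n, ← EReal.coe_toReal hu (hbot u), ← EReal.coe_mul, ← EReal.coe_mul,
      ← EReal.coe_add] at h
    have hmT : Θ ((1 / 2 : ℝ) • u + (1 - (1 / 2 : ℝ)) • x n) ≠ ⊤ := by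
      intro hT
      rw [hT, EReal.top_add_coe] at h
      exact EReal.coe_ne_top _ (top_le_iff.mp h)
    rw [← EReal.coe_toReal hmT (hbot _), ← EReal.coe_add] at h
    have hre := EReal.coe_le_coe_iff.mp h
    have hsg := hsubR n _ hmT
    have hmv : (1 / 2 : ℝ) • u + (1 - (1 / 2 : ℝ)) • x n - x n = (1 / 2 : ℝ) • (u - x n) := by
      module
    rw [hmv, real_inner_smul_right] at hsg
    nlinarith [hre, hsg]
  -- Bregman distance to xh
  set D : ℕ → ℝ := fun n => (Θ xh).toReal - f n - ⟪ξ n, xh - x n⟫_ℝ with hD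
  clear_value D
  have hDanti : Antitone D := by
    refine antitone_nat_of_succ_le fun n => ?_
    have h := hmono xh hAxh hxhT n
    rw [hDcoe xh hxhT n, hDcoe xh hxhT (n + 1)] at h
    simp only [hD]
    exact EReal.coe_le_coe_iff.mp h
  have hDnn : ∀ n, 0 ≤ D n := by
    intro n
    have := hsubR n xh hxhT
    simp only [hD]
    linarith
  have hbdd : BddBelow (Set.range D) := ⟨0, by rintro _ ⟨n, rfl⟩; exact hDnn n⟩
  have hDlim := tendsto_atTop_ciInf hDanti hbdd
  set d : ℝ := ⨅ n, D n with hd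
  clear_value d
  have hdle : ∀ n, d ≤ D n := fun n => by rw [hd]; exact ciInf_le hbdd n
  -- main uniform estimate along the subsequence
  have claim1 : ∀ ε > (0 : ℝ), ∃ L, ∀ l, L ≤ l → ∀ k, l ≤ k →
      f (nk k) - f (nk l) - ⟪ξ (nk l), x (nk k) - x (nk l)⟫_ℝ ≤ ε := by
    intro ε hε
    obtain ⟨L1, hL1⟩ := hsup xh hAxh hxhT (ε / 2) (half_pos hε)
    obtain ⟨L2, hL2⟩ := Metric.tendsto_atTop.mp hDlim (ε / 2) (half_pos hε)
    refine ⟨max L1 L2, fun l hl k hk => ?_⟩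
    have hid : f (nk k) - f (nk l) - ⟪ξ (nk l), x (nk k) - x (nk l)⟫_ℝ
        = (D (nk l) - D (nk k)) + ⟪ξ (nk k) - ξ (nk l), x (nk k) - xh⟫_ℝ := by
      simp only [hD, inner_sub_left, inner_sub_right]
      ring
    have h1 : D (nk l) ≤ D l := hDanti hnk.le_apply
    have h2 : d ≤ D (nk k) := hdle _
    have h3 := hL1 l (le_trans (le_max_left _ _) hl) k hk
    have h4 := hL2 l (le_trans (le_max_right _ _) hl)
    rw [Real.dist_eq] at h4
    have h5 := (abs_lt.mp h4).2
    have h6 := (abs_le.mp h3).2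
    rw [hid]
    linarith
  -- Cauchy sequence
  have hcauchy : CauchySeq (fun k => x (nk k)) := by
    rw [Metric.cauchySeq_iff']
    intro ε hε
    obtain ⟨L, hL⟩ := claim1 (c₀ / 2 * ε ^ 2 / 2) (by positivity)
    refine ⟨L, fun n hn => ?_⟩
    have hk := key (nk L) (x (nk n)) (hfin _)
    have hfe : (Θ (x (nk n))).toReal = f (nk n) := by simp only [hf]
    rw [hfe] at hk
    have hb := hL L le_rfl n hn
    have h7 : ‖x (nk n) - x (nk L)‖ ^ 2 ≤ ε ^ 2 / 2 := by
      have h' : c₀ / 2 * ‖x (nk n) - x (nk L)‖ ^ 2 ≤ c₀ / 2 * (ε ^ 2 / 2) :=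
        (hk.trans hb).trans_eq (by ring)
      exact le_of_mul_le_mul_left h' (by positivity)
    rw [dist_eq_norm]
    nlinarith [norm_nonneg (x (nk n) - x (nk L)), hε]
  obtain ⟨xstar, hxlim⟩ := cauchySeq_tendsto_of_complete hcauchy
  -- A xstar = y
  have hAx : Filter.Tendsto (fun n => A (x n)) Filter.atTop (nhds y) :=
    tendsto_iff_norm_sub_tendsto_zero.mpr hres
  have hAxk : Filter.Tendsto (fun k => A (x (nk k))) Filter.atTop (nhds y) :=
    hAx.comp hnk.tendsto_atTop
  have hAxk' : Filter.Tendsto (fun k => A (x (nk k))) Filter.atTop (nhds (A xstar)) :=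
    (A.continuous.tendsto xstar).comp hxlim
  have hAstar : A xstar = y := tendsto_nhds_unique hAxk' hAxk
  -- claim2 : Bregman distance from xstar is eventually small along nk
  have claim2 : ∀ ε > (0 : ℝ), ∃ L, ∀ l, L ≤ l →
      Θ xstar ≤ ((f (nk l) + ⟪ξ (nk l), xstar - x (nk l)⟫_ℝ + ε : ℝ) : EReal) := by
    intro ε hε
    obtain ⟨L, hL⟩ := claim1 ε hε
    refine ⟨L, fun l hl => ?_⟩
    by_contra hcon
    push_neg at hcon
    obtain ⟨c, hc1, hc2⟩ := exists_between hcon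
    have hcT : c ≠ ⊤ := ne_top_of_lt hc2
    have hcB : c ≠ ⊥ := ne_bot_of_gt hc1
    rw [← EReal.coe_toReal hcT hcB] at hc1 hc2
    set rc : ℝ := c.toReal with hrc
    have hev1 : ∀ᶠ k in Filter.atTop, ((rc : ℝ) : EReal) < Θ (x (nk k)) :=
      hxlim.eventually (hlsc xstar _ hc2)
    have hev2 : ∀ᶠ k in Filter.atTop, rc < f (nk k) := by
      filter_upwards [hev1] with k hk
      rw [hcoe] at hk
      exact EReal.coe_lt_coe_iff.mp hk
    have hbound : ∀ᶠ k in Filter.atTop,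
        rc ≤ f (nk l) + ⟪ξ (nk l), x (nk k) - x (nk l)⟫_ℝ + ε := by
      filter_upwards [hev2, Filter.eventually_ge_atTop l] with k h1 h2
      have := hL l hl k h2
      linarith
    have htend : Filter.Tendsto
        (fun k => f (nk l) + ⟪ξ (nk l), x (nk k) - x (nk l)⟫_ℝ + ε) Filter.atTop
        (nhds (f (nk l) + ⟪ξ (nk l), xstar - x (nk l)⟫_ℝ + ε)) := by
      refine Filter.Tendsto.add (Filter.Tendsto.add tendsto_const_nhds ?_) tendsto_const_nhds
      exact Filter.Tendsto.inner tendsto_const_nhds (hxlim.sub tendsto_const_nhds)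
    have hle := ge_of_tendsto htend hbound
    exact absurd hle (not_le.mpr (EReal.coe_lt_coe_iff.mp hc1))
  have hstarT : Θ xstar ≠ ⊤ := by
    obtain ⟨L, hL⟩ := claim2 1 one_pos
    exact ne_top_of_le_ne_top (EReal.coe_ne_top _) (hL L le_rfl)
  -- Bregman distance to xstar
  set Ds : ℕ → ℝ := fun n => (Θ xstar).toReal - f n - ⟪ξ n, xstar - x n⟫_ℝ with hDs
  clear_value Ds
  have hDsnn : ∀ n, 0 ≤ Ds n := by
    intro n
    have := hsubR n xstar hstarT
    simp only [hDs]
    linarith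
  have hDsanti : Antitone Ds := by
    refine antitone_nat_of_succ_le fun n => ?_
    have h := hmono xstar hAstar hstarT n
    rw [hDcoe xstar hstarT n, hDcoe xstar hstarT (n + 1)] at h
    simp only [hDs]
    exact EReal.coe_le_coe_iff.mp h
  have hDs0 : Filter.Tendsto Ds Filter.atTop (nhds 0) := by
    rw [Metric.tendsto_atTop]
    intro ε hε
    obtain ⟨L, hL⟩ := claim2 (ε / 2) (half_pos hε)
    refine ⟨nk L, fun n hn => ?_⟩
    have h1 : Ds n ≤ Ds (nk L) := hDsanti hn
    have h2 : Ds (nk L) ≤ ε / 2 := by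
      have h := hL L le_rfl
      rw [← EReal.coe_toReal hstarT (hbot xstar)] at h
      have h' := EReal.coe_le_coe_iff.mp h
      simp only [hDs]
      linarith
    rw [Real.dist_eq, sub_zero, abs_of_nonneg (hDsnn n)]
    linarith
  refine ⟨xstar, hAstar, hstarT, ?_⟩
  have heq : (fun n => Θ xstar - Θ (x n) - ((⟪ξ n, xstar - x n⟫_ℝ : ℝ) : EReal))
      = fun n => ((Ds n : ℝ) : EReal) := by
    funext n
    rw [hDcoe xstar hstarT n]
    simp only [hDs]
  rw [heq, show (0 : EReal) = (((0 : ℝ) : ℝ) : EReal) from rfl]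
  exact EReal.tendsto_coe.mpr hDs0
end

section
/- In the setting of the preceding proposition, assume in addition that ξ_{n+1} - ξₙ ∈ Range(A*) for all n, and let x† be the unique solution of Ax = y in dom(Θ) minimizing D_{ξ₀}Θ(·, x₀) over all solutions. Then the limit x* equals x†. -/
/-!
The Bregman distances of two solutions `a`, `b` of `A z = y` differ, along the iteration, by
`Θ a - Θ b - ⟪ξₙ, a - b⟫`; since every increment `ξₙ₊₁ - ξₙ` lies in `Range(A*)` and `a - b` lies in
`Ker A`, this difference is constant in `n`. For `a = x*`, `b = x†` it is nonnegative by the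
minimality of `x†`, so `D_{ξₙ}Θ(x†, xₙ) ≤ D_{ξₙ}Θ(x*, xₙ) → 0`. Strong convexity of `Θ` at a convex
combination of `x*` and `x†`, tested against the subgradient `ξₙ`, bounds `‖x* - x†‖²` by a multiple
of these two distances, hence `x* = x†`.
-/

open scoped InnerProductSpace
open Filter Topology

namespace EReal

lemma ne_top_of_add_coe_le_coe {a : EReal} {r s : ℝ} (h : a + r ≤ s) : a ≠ ⊤ := by
  rintro rfl
  rw [top_add_coe] at h
  exact (coe_lt_top s).not_ge h

lemma toReal_add_le_of_add_coe_le_coe {a : EReal} {r s : ℝ} (ha : a ≠ ⊥) (h : a + r ≤ s) :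
    a.toReal + r ≤ s := by
  rwa [← coe_toReal (ne_top_of_add_coe_le_coe h) ha, ← coe_add, EReal.coe_le_coe_iff] at h

end EReal

lemma eq_of_forall_mul_sq_norm_sub_le {X ι : Type*} [NormedAddCommGroup X] {a b : X} {c : ℝ}
    (hc : 0 < c) {l : Filter ι} [l.NeBot] {u : ι → ℝ} (hu : Tendsto u l (𝓝 0))
    (h : ∀ n, c * ‖a - b‖ ^ 2 ≤ u n) : a = b := by
  have hsq : ‖a - b‖ ^ 2 ≤ 0 := nonpos_of_mul_nonpos_right (ge_of_tendsto' hu h) hc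
  have hnorm : ‖a - b‖ = 0 := (pow_eq_zero_iff two_ne_zero).mp (hsq.antisymm (sq_nonneg _))
  exact sub_eq_zero.mp (norm_eq_zero.mp hnorm)

section Bregman

variable {X : Type*} [NormedAddCommGroup X] [InnerProductSpace ℝ X]

/-- `bregman f ξ x z` is the Bregman distance `D_ξ f(z, x)`. -/
def bregman (f : X → ℝ) (ξ x z : X) : ℝ := f z - f x - ⟪ξ, z - x⟫_ℝ

lemma bregman_sub_bregman (f : X → ℝ) (ξ x a b : X) :
    bregman f ξ x a - bregman f ξ x b = f a - f b - ⟪ξ, a - b⟫_ℝ := by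
  simp only [bregman, inner_sub_right]
  ring

lemma mul_sq_norm_sub_le_bregman (f : X → ℝ) {c s : ℝ} {ξ x a b : X}
    (hconv : f (s • a + (1 - s) • b) + c * s * (1 - s) * ‖a - b‖ ^ 2 ≤ s * f a + (1 - s) * f b)
    (hsub : f x + ⟪ξ, s • a + (1 - s) • b - x⟫_ℝ ≤ f (s • a + (1 - s) • b)) :
    c * s * (1 - s) * ‖a - b‖ ^ 2 ≤ s * bregman f ξ x a + (1 - s) * bregman f ξ x b := by
  have hsplit : s • a + (1 - s) • b - x = s • (a - x) + (1 - s) • (b - x) := by module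
  rw [hsplit, inner_add_right, real_inner_smul_right, real_inner_smul_right] at hsub
  simp only [bregman]
  linarith

theorem eq_of_tendsto_bregman_of_bregman_le (f : X → ℝ) {c s : ℝ} (hc : 0 < c)
    (hs₀ : 0 < s) (hs₁ : s < 1) {ξ x : ℕ → X} {a b : X}
    (hconv : f (s • a + (1 - s) • b) + c * s * (1 - s) * ‖a - b‖ ^ 2 ≤ s * f a + (1 - s) * f b)
    (hsub : ∀ n, f (x n) + ⟪ξ n, s • a + (1 - s) • b - x n⟫_ℝ ≤ f (s • a + (1 - s) • b))
    (hinner : ∀ n, ⟪ξ n, a - b⟫_ℝ = ⟪ξ 0, a - b⟫_ℝ)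
    (hmin : bregman f (ξ 0) (x 0) b ≤ bregman f (ξ 0) (x 0) a)
    (hlim : Tendsto (fun n => bregman f (ξ n) (x n) a) atTop (𝓝 0)) :
    a = b := by
  have hle : ∀ n, bregman f (ξ n) (x n) b ≤ bregman f (ξ n) (x n) a := fun n => by
    have h₀ := bregman_sub_bregman f (ξ 0) (x 0) a b
    have hₙ := bregman_sub_bregman f (ξ n) (x n) a b
    rw [hinner n] at hₙ
    linarith
  refine eq_of_forall_mul_sq_norm_sub_le (mul_pos (mul_pos hc hs₀) (sub_pos.mpr hs₁)) hlim
    fun n => ?_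
  calc c * s * (1 - s) * ‖a - b‖ ^ 2
      ≤ s * bregman f (ξ n) (x n) a + (1 - s) * bregman f (ξ n) (x n) b :=
        mul_sq_norm_sub_le_bregman f hconv (hsub n)
    _ ≤ bregman f (ξ n) (x n) a := by nlinarith [hle n]

end Bregman

lemma inner_eq_inner_zero_of_sub_mem_range_adjoint {X Y : Type*}
    [NormedAddCommGroup X] [InnerProductSpace ℝ X] [CompleteSpace X]
    [NormedAddCommGroup Y] [InnerProductSpace ℝ Y] [CompleteSpace Y]
    (A : X →L[ℝ] Y) {ξ : ℕ → X} (hrange : ∀ n, ξ (n + 1) - ξ n ∈ Set.range A.adjoint)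
    {a b : X} (hab : A a = A b) (n : ℕ) : ⟪ξ n, a - b⟫_ℝ = ⟪ξ 0, a - b⟫_ℝ := by
  induction n with
  | zero => rfl
  | succ n ih =>
    obtain ⟨v, hv⟩ := hrange n
    have hker : ⟪ξ (n + 1) - ξ n, a - b⟫_ℝ = 0 := by
      rw [← hv, ContinuousLinearMap.adjoint_inner_left, map_sub, hab, sub_self, inner_zero_right]
    rw [inner_sub_left] at hker
    linarith

theorem bregman_limit_is_minimum_norm_solution_general
    {X Y : Type*} [NormedAddCommGroup X] [InnerProductSpace ℝ X] [CompleteSpace X]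
    [NormedAddCommGroup Y] [InnerProductSpace ℝ Y] [CompleteSpace Y]
    (Θ : X → EReal) (c₀ : ℝ) (hc₀ : 0 < c₀)
    (hproper : (∀ z, Θ z ≠ ⊥) ∧ ∃ z, Θ z ≠ ⊤)
    (hsc : ∀ (z x : X) (s : ℝ), 0 ≤ s → s ≤ 1 →
      Θ (s • z + (1 - s) • x) + ((c₀ * s * (1 - s) * ‖z - x‖ ^ 2 : ℝ) : EReal)
        ≤ (s : EReal) * Θ z + ((1 - s : ℝ) : EReal) * Θ x)
    (A : X →L[ℝ] Y) (y : Y)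
    (x ξ : ℕ → X)
    (hsub : ∀ n, ∀ z, Θ (x n) + ((⟪ξ n, z - x n⟫_ℝ : ℝ) : EReal) ≤ Θ z)
    (hrange : ∀ n, ξ (n + 1) - ξ n ∈ Set.range (ContinuousLinearMap.adjoint A))
    (xdag : X) (hdag : A xdag = y ∧ Θ xdag ≠ ⊤)
    (hdagmin : ∀ (xhat : X), A xhat = y → Θ xhat ≠ ⊤ →
      Θ xdag - Θ (x 0) - ((⟪ξ 0, xdag - x 0⟫_ℝ : ℝ) : EReal)
        ≤ Θ xhat - Θ (x 0) - ((⟪ξ 0, xhat - x 0⟫_ℝ : ℝ) : EReal))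
    (xstar : X) (hstar : A xstar = y ∧ Θ xstar ≠ ⊤)
    (hstarlim : Filter.Tendsto
      (fun n => Θ xstar - Θ (x n) - ((⟪ξ n, xstar - x n⟫_ℝ : ℝ) : EReal))
      Filter.atTop (nhds (0 : EReal))) :
    xstar = xdag := by
  obtain ⟨hbot, -⟩ := hproper
  set θ : X → ℝ := fun z => (Θ z).toReal
  have hθ : ∀ z, Θ z ≠ ⊤ → Θ z = θ z := fun z hz => (EReal.coe_toReal hz (hbot z)).symm
  have hsubR : ∀ n z, Θ z ≠ ⊤ → θ (x n) + ⟪ξ n, z - x n⟫_ℝ ≤ θ z := fun n z hz =>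
    EReal.toReal_add_le_of_add_coe_le_coe (hbot _) (hθ z hz ▸ hsub n z)
  have hbreg : ∀ n z, Θ z ≠ ⊤ →
      Θ z - Θ (x n) - ((⟪ξ n, z - x n⟫_ℝ : ℝ) : EReal) = bregman θ (ξ n) (x n) z := by
    intro n z hz
    have hxn := EReal.ne_top_of_add_coe_le_coe (hθ z hz ▸ hsub n z)
    rw [hθ z hz, hθ _ hxn, ← EReal.coe_sub, ← EReal.coe_sub]
    rfl
  have hconv := hsc xstar xdag (1 / 2) (by norm_num) (by norm_num)
  rw [hθ _ hstar.2, hθ _ hdag.2, ← EReal.coe_mul, ← EReal.coe_mul, ← EReal.coe_add] at hconv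
  refine eq_of_tendsto_bregman_of_bregman_le θ hc₀ (by norm_num : (0 : ℝ) < 1 / 2) (by norm_num)
    (EReal.toReal_add_le_of_add_coe_le_coe (hbot _) hconv)
    (fun n => hsubR n _ (EReal.ne_top_of_add_coe_le_coe hconv))
    (inner_eq_inner_zero_of_sub_mem_range_adjoint A hrange (hstar.1.trans hdag.1.symm)) ?_ ?_
  · simpa only [hbreg 0 _ hdag.2, hbreg 0 _ hstar.2, EReal.coe_le_coe_iff]
      using hdagmin xstar hstar.1 hstar.2
  · simp_rw [hbreg _ _ hstar.2] at hstarlim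
    exact EReal.tendsto_coe.mp hstarlim

/-- Under hypotheses (i)-(iv) of the proposition, if in addition
`ξ_{n+1} - ξₙ ∈ Range(A*)` for all `n` and `x†` is the solution of `Ax = y` in `dom Θ`
minimizing `D_{ξ₀}Θ(·, x₀)`, then any limit `x*` (solution in `dom Θ` with
`D_{ξₙ}Θ(x*, xₙ) → 0`) equals `x†`. -/
theorem bregman_limit_is_minimum_norm_solution
    {X Y : Type*} [NormedAddCommGroup X] [InnerProductSpace ℝ X] [CompleteSpace X]
    [NormedAddCommGroup Y] [InnerProductSpace ℝ Y] [CompleteSpace Y]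
    (Θ : X → EReal) (c₀ : ℝ) (hc₀ : 0 < c₀)
    (hproper : (∀ z, Θ z ≠ ⊥) ∧ ∃ z, Θ z ≠ ⊤)
    (hlsc : LowerSemicontinuous Θ)
    (hsc : ∀ (z x : X) (s : ℝ), 0 ≤ s → s ≤ 1 →
      Θ (s • z + (1 - s) • x) + ((c₀ * s * (1 - s) * ‖z - x‖ ^ 2 : ℝ) : EReal)
        ≤ (s : EReal) * Θ z + ((1 - s : ℝ) : EReal) * Θ x)
    (A : X →L[ℝ] Y) (y : Y)
    (hex : ∃ xhat : X, A xhat = y ∧ Θ xhat ≠ ⊤)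
    (x ξ : ℕ → X)
    (hsub : ∀ n, ∀ z, Θ (x n) + ((⟪ξ n, z - x n⟫_ℝ : ℝ) : EReal) ≤ Θ z)
    (hmono : ∀ (xhat : X), A xhat = y → Θ xhat ≠ ⊤ → ∀ n,
      Θ xhat - Θ (x (n + 1)) - ((⟪ξ (n + 1), xhat - x (n + 1)⟫_ℝ : ℝ) : EReal)
        ≤ Θ xhat - Θ (x n) - ((⟪ξ n, xhat - x n⟫_ℝ : ℝ) : EReal))
    (hres : Filter.Tendsto (fun n => ‖A (x n) - y‖) Filter.atTop (nhds 0))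
    (nk : ℕ → ℕ) (hnk : StrictMono nk)
    (hsup : ∀ (xhat : X), A xhat = y → Θ xhat ≠ ⊤ → ∀ ε > (0 : ℝ), ∃ L, ∀ l, L ≤ l →
      ∀ k, l ≤ k → |⟪ξ (nk k) - ξ (nk l), x (nk k) - xhat⟫_ℝ| ≤ ε)
    (hrange : ∀ n, ξ (n + 1) - ξ n ∈ Set.range (ContinuousLinearMap.adjoint A))
    (hξ0 : ∀ z, Θ (x 0) + ((⟪ξ 0, z - x 0⟫_ℝ : ℝ) : EReal) ≤ Θ z)
    (xdag : X) (hdag : A xdag = y ∧ Θ xdag ≠ ⊤)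
    (hdagmin : ∀ (xhat : X), A xhat = y → Θ xhat ≠ ⊤ →
      Θ xdag - Θ (x 0) - ((⟪ξ 0, xdag - x 0⟫_ℝ : ℝ) : EReal)
        ≤ Θ xhat - Θ (x 0) - ((⟪ξ 0, xhat - x 0⟫_ℝ : ℝ) : EReal))
    (xstar : X) (hstar : A xstar = y ∧ Θ xstar ≠ ⊤)
    (hstarlim : Filter.Tendsto
      (fun n => Θ xstar - Θ (x n) - ((⟪ξ n, xstar - x n⟫_ℝ : ℝ) : EReal))
      Filter.atTop (nhds (0 : EReal))) :
    xstar = xdag :=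
  bregman_limit_is_minimum_norm_solution_general Θ c₀ hc₀ hproper hsc A y x ξ hsub hrange xdag hdag
    hdagmin xstar hstar hstarlim
end

section
/- For the noisy-data iteration ξ_{n+1}^δ = ξₙ^δ - tₙ^δ A*(αₙ I + AA*)^{-1}(Axₙ^δ - y^δ), xₙ^δ = ∇Θ*(ξₙ^δ), with ‖y^δ - y‖ ≤ δ, step sizes tₙ^δ given by the min-rule with 0 < μ₀ < 4c₀(1 - 1/τ) and μ₁ > 0 (τ > 1), assume that for all n < m the stopping test fails, i.e. √(αₙ)‖(αₙ I + AA*)^{-1/2}(Axₙ^δ - y^δ)‖ > τδ. Then for every solution x̂ of Ax = y in dom(Θ) and every 0 ≤ n < m: D_{ξ_{n+1}^δ}Θ(x̂, x_{n+1}^δ) - D_{ξₙ^δ}Θ(x̂, xₙ^δ) ≤ -(1 - 1/τ - μ₀/(4c₀)) tₙ^δ ‖(αₙ I + AA*)^{-1/2}(Axₙ^δ - y^δ)‖² ≤ 0. -/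
/-!
Strong convexity makes `Θ - ⟪ξₙ, ·⟫` grow quadratically away from its minimizer `xₙ`:
`Θ z - Θ xₙ ≥ ⟪ξₙ, z - xₙ⟫ + c₀ ‖z - xₙ‖²`. Together with Young's inequality this gives the
three-point estimate `D_{ξ'}Θ(x̂, x') - D_ξΘ(x̂, x) ≤ ‖ξ' - ξ‖²/(4c₀) - ⟪ξ' - ξ, x̂ - x⟫`.
For the update `ξ' - ξ = -t A*B²r`, with `B = (αI + AA*)^{-1/2}` and `r = Ax - y^δ`, the min-rule
gives `t ‖A*B²r‖² ≤ μ₀ ‖Br‖²`, and `Ax̂ = y` turns `⟪A*B²r, x̂ - x⟫` into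
`⟪Br, B(y - y^δ)⟫ - ‖Br‖²`. Since `√α ‖B(y - y^δ)‖ ≤ δ < √α ‖Br‖ / τ` while the stopping test
fails, the noise term is at most `‖Br‖²/τ`, leaving a decrease of
`(1 - 1/τ - μ₀/(4c₀)) t ‖Br‖²`.
-/

open scoped InnerProductSpace
open ContinuousLinearMap Filter Topology

lemma real_inner_le_norm_sq_div_add {E : Type*} [NormedAddCommGroup E] [InnerProductSpace ℝ E]
    {c : ℝ} (hc : 0 < c) (u v : E) : ⟪u, v⟫_ℝ ≤ ‖u‖ ^ 2 / (4 * c) + c * ‖v‖ ^ 2 := by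
  refine (real_inner_le_norm u v).trans ?_
  rw [div_add' _ _ _ (by positivity), le_div_iff₀ (by positivity)]
  nlinarith [sq_nonneg (‖u‖ - 2 * c * ‖v‖)]

lemma min_div_mul_le {a b : ℝ} (μ : ℝ) (ha : 0 ≤ a) (hb : 0 ≤ b) : min (a / b) μ * b ≤ a := by
  refine (mul_le_mul_of_nonneg_right (min_le_left _ _) hb).trans ?_
  rcases hb.eq_or_lt with rfl | hb
  · simpa using ha
  · rw [div_mul_cancel₀ a hb.ne']

lemma EReal.exists_eq_coe {x : EReal} (htop : x ≠ ⊤) (hbot : x ≠ ⊥) : ∃ r : ℝ, x = r :=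
  ⟨_, (EReal.coe_toReal htop hbot).symm⟩

section Bregman

variable {X : Type*} [NormedAddCommGroup X] [InnerProductSpace ℝ X] {Θ : X → EReal} {c₀ : ℝ}

/-- Strong convexity of an extended-real function with modulus `c₀` in the paper's normalization
(Mathlib's `StrongConvexOn ℝ univ m` has `m = 2 c₀`). -/
def IsStronglyConvexWith (Θ : X → EReal) (c₀ : ℝ) : Prop :=
  ∀ (z x : X) (s : ℝ), 0 ≤ s → s ≤ 1 →
    Θ (s • z + (1 - s) • x) + ((c₀ * s * (1 - s) * ‖z - x‖ ^ 2 : ℝ) : EReal)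
      ≤ (s : EReal) * Θ z + ((1 - s : ℝ) : EReal) * Θ x

/-- `x` minimizes `Θ - ⟪ξ, ·⟫`, i.e. `ξ ∈ ∂Θ(x)` and `x = ∇Θ*(ξ)`. -/
def IsTiltMinimizer (Θ : X → EReal) (ξ x : X) : Prop :=
  ∀ z, Θ x - ((⟪ξ, x⟫_ℝ : ℝ) : EReal) ≤ Θ z - ((⟪ξ, z⟫_ℝ : ℝ) : EReal)

/-- The Bregman distance `D_ξ Θ(x̂, x)`. -/
noncomputable def bregmanDist (Θ : X → EReal) (ξ xhat x : X) : EReal :=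
  Θ xhat - Θ x - ((⟪ξ, xhat - x⟫_ℝ : ℝ) : EReal)

lemma IsTiltMinimizer.ne_top {ξ x z : X} (hmin : IsTiltMinimizer Θ ξ x) (hbot : ∀ z, Θ z ≠ ⊥)
    (hz : Θ z ≠ ⊤) : Θ x ≠ ⊤ := by
  obtain ⟨θz, hθz⟩ := EReal.exists_eq_coe hz (hbot _)
  intro hx
  have h := hmin z
  rw [hx, hθz, EReal.top_sub_coe, ← EReal.coe_sub] at h
  exact (EReal.coe_lt_top _).not_ge h

lemma IsStronglyConvexWith.exists_coe_le (hΘ : IsStronglyConvexWith Θ c₀)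
    (hbot : ∀ z, Θ z ≠ ⊥) {z x : X} {θz θx : ℝ} (hz : Θ z = θz) (hx : Θ x = θx)
    {s : ℝ} (hs0 : 0 ≤ s) (hs1 : s ≤ 1) :
    ∃ θ : ℝ, Θ (s • z + (1 - s) • x) = θ ∧
      θ + c₀ * s * (1 - s) * ‖z - x‖ ^ 2 ≤ s * θz + (1 - s) * θx := by
  have h := hΘ z x s hs0 hs1
  rw [hz, hx, ← EReal.coe_mul, ← EReal.coe_mul, ← EReal.coe_add] at h
  have htop : Θ (s • z + (1 - s) • x) ≠ ⊤ := fun htop => by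
    rw [htop, EReal.top_add_coe] at h
    exact (EReal.coe_lt_top _).not_ge h
  obtain ⟨θ, hθ⟩ := EReal.exists_eq_coe htop (hbot _)
  rw [hθ, ← EReal.coe_add, EReal.coe_le_coe_iff] at h
  exact ⟨θ, hθ, h⟩

lemma IsTiltMinimizer.inner_add_mul_norm_sq_le {ξ x z : X} {θx θz : ℝ}
    (hmin : IsTiltMinimizer Θ ξ x) (hΘ : IsStronglyConvexWith Θ c₀) (hbot : ∀ z, Θ z ≠ ⊥)
    (hx : Θ x = θx) (hz : Θ z = θz) :
    ⟪ξ, z - x⟫_ℝ + c₀ * ‖z - x‖ ^ 2 ≤ θz - θx := by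
  have hsegment : ∀ s ∈ Set.Ioc (0 : ℝ) 1,
      ⟪ξ, z - x⟫_ℝ + c₀ * (1 - s) * ‖z - x‖ ^ 2 ≤ θz - θx := by
    rintro s ⟨hs0, hs1⟩
    obtain ⟨θ, hθ, hconv⟩ := hΘ.exists_coe_le hbot hz hx hs0.le hs1
    have harg := hmin (s • z + (1 - s) • x)
    rw [hx, hθ, ← EReal.coe_sub, ← EReal.coe_sub, EReal.coe_le_coe_iff, inner_add_right,
      real_inner_smul_right, real_inner_smul_right] at harg
    rw [inner_sub_right]
    refine le_of_mul_le_mul_left ?_ hs0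
    nlinarith
  have hlim : Tendsto (fun s : ℝ => ⟪ξ, z - x⟫_ℝ + c₀ * (1 - s) * ‖z - x‖ ^ 2) (𝓝[>] 0)
      (𝓝 (⟪ξ, z - x⟫_ℝ + c₀ * ‖z - x‖ ^ 2)) := by
    have hcont : Continuous fun s : ℝ => ⟪ξ, z - x⟫_ℝ + c₀ * (1 - s) * ‖z - x‖ ^ 2 := by
      fun_prop
    simpa using (hcont.tendsto 0).mono_left nhdsWithin_le_nhds
  exact le_of_tendsto hlim (mem_of_superset (Ioc_mem_nhdsGT one_pos) hsegment)

theorem bregmanDist_add_le (hc₀ : 0 < c₀) (hΘ : IsStronglyConvexWith Θ c₀)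
    (hbot : ∀ z, Θ z ≠ ⊥) {ξ ξ' x x' xhat : X} (hmin : IsTiltMinimizer Θ ξ x)
    (hmin' : IsTiltMinimizer Θ ξ' x') (hxhat : Θ xhat ≠ ⊤) :
    bregmanDist Θ ξ' xhat x'
        + ((⟪ξ' - ξ, xhat - x⟫_ℝ - ‖ξ' - ξ‖ ^ 2 / (4 * c₀) : ℝ) : EReal)
      ≤ bregmanDist Θ ξ xhat x := by
  obtain ⟨θhat, hθhat⟩ := EReal.exists_eq_coe hxhat (hbot _)
  obtain ⟨θx, hθx⟩ := EReal.exists_eq_coe (hmin.ne_top hbot hxhat) (hbot _)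
  obtain ⟨θx', hθx'⟩ := EReal.exists_eq_coe (hmin'.ne_top hbot hxhat) (hbot _)
  have hgrowth := hmin.inner_add_mul_norm_sq_le hΘ hbot hθx hθx'
  have hyoung := real_inner_le_norm_sq_div_add hc₀ (ξ' - ξ) (x' - x)
  simp only [bregmanDist, hθhat, hθx, hθx', ← EReal.coe_sub, ← EReal.coe_add,
    EReal.coe_le_coe_iff]
  simp only [inner_sub_left, inner_sub_right] at hgrowth hyoung ⊢
  linarith

end Bregman

section Resolvent

variable {X Y : Type*} [NormedAddCommGroup X] [InnerProductSpace ℝ X] [CompleteSpace X]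
  [NormedAddCommGroup Y] [InnerProductSpace ℝ Y] [CompleteSpace Y] {S B : Y →L[ℝ] Y}

lemma IsSelfAdjoint.of_comp_eq_one (hS : IsSelfAdjoint S) (hSB : S ∘L B = 1) :
    IsSelfAdjoint B := by
  have hSBv (v : Y) : S (B v) = v := by simpa using DFunLike.congr_fun hSB v
  refine LinearMap.IsSymmetric.isSelfAdjoint fun u v => ?_
  calc ⟪B u, v⟫_ℝ = ⟪B u, S (B v)⟫_ℝ := by rw [hSBv]
    _ = ⟪S (B u), B v⟫_ℝ := (hS.isSymmetric _ _).symm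
    _ = ⟪u, B v⟫_ℝ := by rw [hSBv]

lemma norm_sq_apply_eq_of_comp_self_eq (A : X →L[ℝ] Y) {α : ℝ} (hS : IsSelfAdjoint S)
    (hSS : S ∘L S = α • (1 : Y →L[ℝ] Y) + A ∘L adjoint A) (u : Y) :
    ‖S u‖ ^ 2 = α * ‖u‖ ^ 2 + ‖adjoint A u‖ ^ 2 := by
  rw [← real_inner_self_eq_norm_sq, ← adjoint_inner_right S, hS.adjoint_eq, ← comp_apply, hSS]
  rw [add_apply, smul_apply, one_apply_eq_self, comp_apply, inner_add_right, real_inner_smul_right,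
    ← adjoint_inner_left, real_inner_self_eq_norm_sq, real_inner_self_eq_norm_sq]

lemma sqrt_mul_norm_le_of_comp_self_eq (A : X →L[ℝ] Y) {α : ℝ} (hα : 0 ≤ α)
    (hS : IsSelfAdjoint S) (hSS : S ∘L S = α • (1 : Y →L[ℝ] Y) + A ∘L adjoint A)
    (hSB : S ∘L B = 1) (v : Y) : Real.sqrt α * ‖B v‖ ≤ ‖v‖ := by
  have hv := norm_sq_apply_eq_of_comp_self_eq A hS hSS (B v)
  rw [show S (B v) = v by simpa using DFunLike.congr_fun hSB v] at hv
  refine le_of_sq_le_sq ?_ (norm_nonneg v)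
  rw [mul_pow, Real.sq_sqrt hα, hv]
  exact le_add_of_nonneg_right (sq_nonneg _)

lemma inner_adjoint_apply_sub_le (A : X →L[ℝ] Y) {α τ δ : ℝ} (hα : 0 < α) (hτ : 0 < τ)
    (hS : IsSelfAdjoint S) (hSS : S ∘L S = α • (1 : Y →L[ℝ] Y) + A ∘L adjoint A)
    (hSB : S ∘L B = 1) {xhat x : X} {y yδ : Y} (hAxhat : A xhat = y) (hnoise : ‖yδ - y‖ ≤ δ)
    (hfail : τ * δ ≤ Real.sqrt α * ‖B (A x - yδ)‖) :
    ⟪adjoint A (B (B (A x - yδ))), xhat - x⟫_ℝ ≤ (1 / τ - 1) * ‖B (A x - yδ)‖ ^ 2 := by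
  set r := A x - yδ
  have hsplit : ⟪adjoint A (B (B r)), xhat - x⟫_ℝ = ⟪B r, B (y - yδ)⟫_ℝ - ‖B r‖ ^ 2 := by
    have hAr : A (xhat - x) = (y - yδ) - r := by
      rw [map_sub, hAxhat]; exact (sub_sub_sub_cancel_right _ _ _).symm
    rw [adjoint_inner_left, ← adjoint_inner_right B, (hS.of_comp_eq_one hSB).adjoint_eq, hAr,
      map_sub B (y - yδ) r, inner_sub_right, real_inner_self_eq_norm_sq]
  have hdata : τ * ‖B (y - yδ)‖ ≤ ‖B r‖ := by
    refine le_of_mul_le_mul_left ?_ (Real.sqrt_pos.2 hα)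
    calc Real.sqrt α * (τ * ‖B (y - yδ)‖) = τ * (Real.sqrt α * ‖B (y - yδ)‖) := by ring
      _ ≤ τ * δ := by
        gcongr
        exact (sqrt_mul_norm_le_of_comp_self_eq A hα.le hS hSS hSB _).trans
          (by rwa [norm_sub_rev])
      _ ≤ Real.sqrt α * ‖B r‖ := hfail
  have hnoise_term : ⟪B r, B (y - yδ)⟫_ℝ ≤ ‖B r‖ ^ 2 / τ :=
    calc ⟪B r, B (y - yδ)⟫_ℝ ≤ ‖B r‖ * ‖B (y - yδ)‖ := real_inner_le_norm _ _
      _ ≤ ‖B r‖ * (‖B r‖ / τ) := by gcongr; rwa [le_div_iff₀' hτ]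
      _ = ‖B r‖ ^ 2 / τ := by ring
  rw [hsplit]
  linarith [show (1 / τ - 1) * ‖B r‖ ^ 2 = ‖B r‖ ^ 2 / τ - ‖B r‖ ^ 2 by ring]

end Resolvent

theorem noisy_iteration_bregman_monotone_general
    {X Y : Type*} [NormedAddCommGroup X] [InnerProductSpace ℝ X] [CompleteSpace X]
    [NormedAddCommGroup Y] [InnerProductSpace ℝ Y] [CompleteSpace Y]
    (Θ : X → EReal) (c₀ : ℝ) (hc₀ : 0 < c₀)
    (hproper : (∀ z, Θ z ≠ ⊥) ∧ ∃ z, Θ z ≠ ⊤)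
    (hsc : ∀ (z x : X) (s : ℝ), 0 ≤ s → s ≤ 1 →
      Θ (s • z + (1 - s) • x) + ((c₀ * s * (1 - s) * ‖z - x‖ ^ 2 : ℝ) : EReal)
        ≤ (s : EReal) * Θ z + ((1 - s : ℝ) : EReal) * Θ x)
    (A : X →L[ℝ] Y) (y yδ : Y) (δ : ℝ) (hnoise : ‖yδ - y‖ ≤ δ)
    (τ : ℝ) (hτ : 1 < τ)
    (α : ℕ → ℝ) (hαpos : ∀ n, 0 < α n)
    (S B : ℕ → (Y →L[ℝ] Y))
    (hSsa : ∀ n, IsSelfAdjoint (S n))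
    (hSsq : ∀ n, S n ∘L S n = α n • (1 : Y →L[ℝ] Y) + A ∘L ContinuousLinearMap.adjoint A)
    (hSB : ∀ n, S n ∘L B n = 1)
    (μ₀ μ₁ : ℝ) (hμ₀ : 0 < μ₀) (hμ₀' : μ₀ < 4 * c₀ * (1 - 1 / τ)) (hμ₁ : 0 < μ₁)
    (ξ x : ℕ → X) (t : ℕ → ℝ)
    (hargmin : ∀ n, ∀ z : X,
      Θ (x n) - ((⟪ξ n, x n⟫_ℝ : ℝ) : EReal) ≤ Θ z - ((⟪ξ n, z⟫_ℝ : ℝ) : EReal))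
    (ht : ∀ n, t n = min (μ₀ * ⟪B n (B n (A (x n) - yδ)), A (x n) - yδ⟫_ℝ /
      ‖ContinuousLinearMap.adjoint A (B n (B n (A (x n) - yδ)))‖ ^ 2) μ₁)
    (hiter : ∀ n, ξ (n + 1)
      = ξ n - t n • ContinuousLinearMap.adjoint A (B n (B n (A (x n) - yδ))))
    (m : ℕ)
    (hfail : ∀ n < m, τ * δ < Real.sqrt (α n) * ‖B n (A (x n) - yδ)‖) :
    ∀ (xhat : X), A xhat = y → Θ xhat ≠ ⊤ → ∀ n < m,
      0 ≤ (1 - 1 / τ - μ₀ / (4 * c₀)) * t n * ‖B n (A (x n) - yδ)‖ ^ 2 ∧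
      (Θ xhat - Θ (x (n + 1)) - ((⟪ξ (n + 1), xhat - x (n + 1)⟫_ℝ : ℝ) : EReal))
          + (((1 - 1 / τ - μ₀ / (4 * c₀)) * t n * ‖B n (A (x n) - yδ)‖ ^ 2 : ℝ) : EReal)
        ≤ Θ xhat - Θ (x n) - ((⟪ξ n, xhat - x n⟫_ℝ : ℝ) : EReal) := by
  intro xhat hAxhat hxhat n hn
  set r := A (x n) - yδ
  set w := adjoint A (B n (B n r))
  have hBr : ⟪B n (B n r), r⟫_ℝ = ‖B n r‖ ^ 2 := by
    rw [← adjoint_inner_right (B n), ((hSsa n).of_comp_eq_one (hSB n)).adjoint_eq,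
      real_inner_self_eq_norm_sq]
  have ht0 : 0 ≤ t n := by
    rw [ht n, hBr]
    exact le_min (by positivity) hμ₁.le
  have htw : t n * ‖w‖ ^ 2 ≤ μ₀ * ‖B n r‖ ^ 2 := by
    rw [ht n, hBr]
    exact min_div_mul_le μ₁ (by positivity) (by positivity)
  have hdescent : ⟪w, xhat - x n⟫_ℝ ≤ (1 / τ - 1) * ‖B n r‖ ^ 2 :=
    inner_adjoint_apply_sub_le A (hαpos n) (by linarith) (hSsa n) (hSsq n) (hSB n) hAxhat hnoise
      (hfail n hn).le
  have hcoef : 0 < 1 - 1 / τ - μ₀ / (4 * c₀) := by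
    rw [sub_pos, div_lt_iff₀ (by positivity)]
    linarith
  refine ⟨by positivity, le_trans (add_le_add le_rfl (EReal.coe_le_coe_iff.2 ?_))
    (bregmanDist_add_le hc₀ hsc hproper.1 (hargmin n) (hargmin (n + 1)) hxhat)⟩
  have hξ : ξ (n + 1) - ξ n = -(t n • w) := by rw [hiter n, sub_sub_cancel_left]
  have hstep : t n ^ 2 * ‖w‖ ^ 2 / (4 * c₀) ≤ t n * (μ₀ * ‖B n r‖ ^ 2) / (4 * c₀) := by
    rw [sq, mul_assoc]
    gcongr
  have hdescent' := mul_le_mul_of_nonneg_left hdescent ht0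
  rw [hξ, inner_neg_left, real_inner_smul_left, norm_neg, norm_smul, mul_pow, Real.norm_eq_abs,
    sq_abs]
  linear_combination hdescent' + hstep

/-- Noisy-data monotonicity. For the iteration
`ξ_{n+1}^δ = ξₙ^δ - tₙ^δ A*(αₙI + AA*)⁻¹(Axₙ^δ - y^δ)` with min-rule step sizes,
`0 < μ₀ < 4c₀(1 - 1/τ)`, `μ₁ > 0`, `τ > 1`, `‖y^δ - y‖ ≤ δ`: if the stopping test fails
for all `n < m` (i.e. `√αₙ ‖(αₙI+AA*)^{-1/2}(Axₙ^δ - y^δ)‖ > τδ`), then for every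
solution `x̂` of `Ax = y` in `dom Θ` and every `n < m`, the Bregman distance decreases by
at least `(1 - 1/τ - μ₀/(4c₀)) tₙ^δ ‖(αₙI+AA*)^{-1/2}(Axₙ^δ - y^δ)‖² ≥ 0`. -/
theorem noisy_iteration_bregman_monotone
    {X Y : Type*} [NormedAddCommGroup X] [InnerProductSpace ℝ X] [CompleteSpace X]
    [NormedAddCommGroup Y] [InnerProductSpace ℝ Y] [CompleteSpace Y]
    (Θ : X → EReal) (c₀ : ℝ) (hc₀ : 0 < c₀)
    (hproper : (∀ z, Θ z ≠ ⊥) ∧ ∃ z, Θ z ≠ ⊤)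
    (hlsc : LowerSemicontinuous Θ)
    (hsc : ∀ (z x : X) (s : ℝ), 0 ≤ s → s ≤ 1 →
      Θ (s • z + (1 - s) • x) + ((c₀ * s * (1 - s) * ‖z - x‖ ^ 2 : ℝ) : EReal)
        ≤ (s : EReal) * Θ z + ((1 - s : ℝ) : EReal) * Θ x)
    (A : X →L[ℝ] Y) (y yδ : Y) (δ : ℝ) (hδ : 0 < δ) (hnoise : ‖yδ - y‖ ≤ δ)
    (τ : ℝ) (hτ : 1 < τ)
    (α : ℕ → ℝ) (hαpos : ∀ n, 0 < α n) (hαdec : ∀ n, α (n + 1) ≤ α n)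
    (S B : ℕ → (Y →L[ℝ] Y))
    (hSsa : ∀ n, IsSelfAdjoint (S n))
    (hSpos : ∀ n, ∀ w : Y, 0 ≤ ⟪S n w, w⟫_ℝ)
    (hSsq : ∀ n, S n ∘L S n = α n • (1 : Y →L[ℝ] Y) + A ∘L ContinuousLinearMap.adjoint A)
    (hBS : ∀ n, B n ∘L S n = 1) (hSB : ∀ n, S n ∘L B n = 1)
    (μ₀ μ₁ : ℝ) (hμ₀ : 0 < μ₀) (hμ₀' : μ₀ < 4 * c₀ * (1 - 1 / τ)) (hμ₁ : 0 < μ₁)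
    (ξ x : ℕ → X) (t : ℕ → ℝ)
    (hargmin : ∀ n, ∀ z : X,
      Θ (x n) - ((⟪ξ n, x n⟫_ℝ : ℝ) : EReal) ≤ Θ z - ((⟪ξ n, z⟫_ℝ : ℝ) : EReal))
    (ht : ∀ n, t n = min (μ₀ * ⟪B n (B n (A (x n) - yδ)), A (x n) - yδ⟫_ℝ /
      ‖ContinuousLinearMap.adjoint A (B n (B n (A (x n) - yδ)))‖ ^ 2) μ₁)
    (hiter : ∀ n, ξ (n + 1)
      = ξ n - t n • ContinuousLinearMap.adjoint A (B n (B n (A (x n) - yδ))))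
    (m : ℕ)
    (hfail : ∀ n < m, τ * δ < Real.sqrt (α n) * ‖B n (A (x n) - yδ)‖) :
    ∀ (xhat : X), A xhat = y → Θ xhat ≠ ⊤ → ∀ n < m,
      0 ≤ (1 - 1 / τ - μ₀ / (4 * c₀)) * t n * ‖B n (A (x n) - yδ)‖ ^ 2 ∧
      (Θ xhat - Θ (x (n + 1)) - ((⟪ξ (n + 1), xhat - x (n + 1)⟫_ℝ : ℝ) : EReal))
          + (((1 - 1 / τ - μ₀ / (4 * c₀)) * t n * ‖B n (A (x n) - yδ)‖ ^ 2 : ℝ) : EReal)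
        ≤ Θ xhat - Θ (x n) - ((⟪ξ n, xhat - x n⟫_ℝ : ℝ) : EReal) :=
  noisy_iteration_bregman_monotone_general Θ c₀ hc₀ hproper hsc A y yδ δ hnoise τ hτ α hαpos S B
    hSsa hSsq hSB μ₀ μ₁ hμ₀ hμ₀' hμ₁ ξ x t hargmin ht hiter m hfail
end
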